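/- arXiv:2407.08854 — 4 statements merged into one kernel-verified Lean document; each statement's English description precedes it below -/
import Mathlib

section
/- Let G be a locally finite graph, x ~ y an edge, and G_{xy} the subgraph induced by the core neighborhood N_{xy} = S₁(x) ∪ S₁(y) ∪ P_{xy}, where P_{xy} = {i : d(x,i) = d(y,i) = 2}. Then for every α ∈ [0,1], the α-Ollivier-Ricci curvature of the edge x ~ y in G equals that in G_{xy}. -/
open scoped Classical BigOperators

noncomputable section

namespace OllivierRicci

variable {V : Type*}

/-- A probability measure on the vertex set, given as a nonnegative function summing to 1. -/
def IsProb (μ : V → ℝ) : Prop := (∀ x, 0 ≤ μ x) ∧ HasSum μ 1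

/-- A transport plan (coupling) between two measures. -/
def IsPlan (μ₁ μ₂ : V → ℝ) (π : V → V → ℝ) : Prop :=
  (∀ x y, 0 ≤ π x y) ∧ (∀ x, HasSum (fun y => π x y) (μ₁ x)) ∧
    (∀ y, HasSum (fun x => π x y) (μ₂ y))

/-- The transport cost of a plan with respect to the shortest-path metric. -/
def cost (G : SimpleGraph V) (π : V → V → ℝ) : ℝ :=
  ∑' p : V × V, (G.dist p.1 p.2 : ℝ) * π p.1 p.2

/-- The 1-Wasserstein distance between two measures on the vertex set. -/
def W1 (G : SimpleGraph V) (μ₁ μ₂ : V → ℝ) : ℝ :=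
  sInf {c : ℝ | ∃ π : V → V → ℝ, IsPlan μ₁ μ₂ π ∧ cost G π = c}

/-- The lazy random walk measure `μ_x^α`. -/
def mu (G : SimpleGraph V) (α : ℝ) (x : V) : V → ℝ := fun z =>
  if z = x then α else if G.Adj x z then (1 - α) / ((G.neighborSet x).ncard : ℝ) else 0

/-- The `α`-Ollivier-Ricci curvature `κ_α(x,y)`. -/
def kappaAlpha (G : SimpleGraph V) (α : ℝ) (x y : V) : ℝ :=
  1 - W1 G (mu G α x) (mu G α y) / (G.dist x y : ℝ)

/-- The Lin-Lu-Yau curvature `κ(x,y) = lim_{α → 1} κ_α(x,y)/(1-α)`. -/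
def kappa (G : SimpleGraph V) (x y : V) : ℝ :=
  Filter.limUnder (nhdsWithin (1 : ℝ) (Set.Iio 1)) fun α => kappaAlpha G α x y / (1 - α)

/-- The set of common neighbors `△(x,y)`. -/
def triangleSet (G : SimpleGraph V) (x y : V) : Set V :=
  G.neighborSet x ∩ G.neighborSet y

/-- `R_x(x,y) = S₁(x) \ (△(x,y) ∪ {y})`. -/
def RxSet (G : SimpleGraph V) (x y : V) : Set V :=
  G.neighborSet x \ (triangleSet G x y ∪ {y})

/-- `R_y(x,y) = S₁(y) \ (△(x,y) ∪ {x})`. -/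
def RySet (G : SimpleGraph V) (x y : V) : Set V :=
  G.neighborSet y \ (triangleSet G x y ∪ {x})

/-- The cost `∑_{z ∈ A} d(z, φ(z))` of an assignment `φ` on the set `A`. -/
def assignCostOf (G : SimpleGraph V) (A : Set V) (φ : V → V) : ℝ :=
  ∑ᶠ z ∈ A, (G.dist z (φ z) : ℝ)

/-- The minimal cost over all assignments (bijections) between `A` and `B`. -/
def assignCost (G : SimpleGraph V) (A B : Set V) : ℝ :=
  sInf {c : ℝ | ∃ φ : V → V, Set.BijOn φ A B ∧ assignCostOf G A φ = c}

/-- `φ` is an optimal assignment between `A` and `B`. -/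
def IsOptAssign (G : SimpleGraph V) (A B : Set V) (φ : V → V) : Prop :=
  Set.BijOn φ A B ∧ assignCostOf G A φ = assignCost G A B

end OllivierRicci

/-!
A vertex charged by `μ_x^α` or `μ_y^α` lies within distance one of `x` or `y`, and every such
vertex belongs to the core neighborhood `N_{xy}`. A transport plan between the two measures is
therefore supported on `N_{xy} × N_{xy}`, so plans in `G` and in `G_{xy}` correspond by restriction
and extension by zero. Their costs agree because between `u ∈ B₁(x)` and `v ∈ B₁(y)` there is
always a shortest path inside `N_{xy}`: for `d(u,v) ≤ 2` every shortest path stays within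
distance two of both `x` and `y`, and for `d(u,v) = 3` the path `u, x, y, v` does.
-/

namespace SimpleGraph

variable {V : Type*} {G : SimpleGraph V}

lemma ncard_neighborSet_induce_of_neighborSet_subset {S : Set V} {a : V} (ha : a ∈ S)
    (hS : G.neighborSet a ⊆ S) :
    ((G.induce S).neighborSet ⟨a, ha⟩).ncard = (G.neighborSet a).ncard := by
  have himage : Subtype.val '' (G.induce S).neighborSet ⟨a, ha⟩ = G.neighborSet a := by
    ext z
    constructor
    · rintro ⟨b, hb, rfl⟩
      simpa using hb
    · intro hz
      exact ⟨⟨z, hS hz⟩, by simpa using hz, rfl⟩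
  rw [← himage, Set.ncard_image_of_injective _ Subtype.val_injective]

lemma Walk.dist_add_dist_le_length {u v w : V} (p : G.Walk u v) (hw : w ∈ p.support) :
    G.dist u w + G.dist w v ≤ p.length := by
  rw [← p.take_spec hw, Walk.length_append]
  exact add_le_add (dist_le _) (dist_le _)

lemma dist_induce_eq_of_walk {S : Set V} {u v : V} (p : G.Walk u v)
    (hp : p.length = G.dist u v) (hS : ∀ w ∈ p.support, w ∈ S) :
    (G.induce S).dist ⟨u, hS u p.start_mem_support⟩ ⟨v, hS v p.end_mem_support⟩ = G.dist u v := by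
  have hlen : (p.induce S hS).length = p.length := by
    have := congrArg Walk.length (p.map_induce hS)
    rwa [Walk.length_map] at this
  obtain ⟨q, hq⟩ := (p.induce S hS).reachable.exists_walk_length_eq_dist
  have hlift : G.dist u v ≤ q.length := by
    have := dist_le (q.map (Embedding.induce S).toHom)
    rwa [Walk.length_map] at this
  have hinduce := dist_le (p.induce S hS)
  omega

end SimpleGraph

namespace OllivierRicci

open SimpleGraph

variable {V : Type*}

section Transport

variable {μ₁ μ₂ : V → ℝ} {π : V → V → ℝ} {S : Set V}

lemma IsPlan.ne_zero_of_ne_zero (hπ : IsPlan μ₁ μ₂ π) {u v : V} (h : π u v ≠ 0) :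
    μ₁ u ≠ 0 ∧ μ₂ v ≠ 0 := by
  obtain ⟨hpos, hrow, hcol⟩ := hπ
  constructor
  · intro hu
    exact h (le_antisymm (hu ▸ le_hasSum (hrow u) v fun w _ => hpos u w) (hpos u v))
  · intro hv
    exact h (le_antisymm (hv ▸ le_hasSum (hcol v) u fun w _ => hpos w v) (hpos u v))

lemma isPlan_restrict_iff (h₁ : ∀ u ∉ S, μ₁ u = 0) (h₂ : ∀ v ∉ S, μ₂ v = 0)
    (hπ : ∀ u v, π u v ≠ 0 → u ∈ S ∧ v ∈ S) :
    IsPlan (fun a : S => μ₁ a) (fun b : S => μ₂ b) (fun a b : S => π a b) ↔ IsPlan μ₁ μ₂ π := by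
  have hrow (u : V) : HasSum (fun b : S => π u b) (μ₁ u) ↔ HasSum (π u) (μ₁ u) :=
    hasSum_subtype_iff_of_support_subset fun v hv => (hπ u v hv).2
  have hcol (v : V) : HasSum (fun a : S => π a v) (μ₂ v) ↔ HasSum (π · v) (μ₂ v) :=
    hasSum_subtype_iff_of_support_subset fun u hu => (hπ u v hu).1
  constructor
  · rintro ⟨hpos, hrow', hcol'⟩
    refine ⟨fun u v => ?_, fun u => ?_, fun v => ?_⟩
    · by_cases h : π u v = 0
      · exact h.ge
      · exact hpos ⟨u, (hπ u v h).1⟩ ⟨v, (hπ u v h).2⟩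
    · by_cases hu : u ∈ S
      · exact (hrow u).1 (hrow' ⟨u, hu⟩)
      · have : π u = 0 := funext fun v => by_contra fun h => hu (hπ u v h).1
        rw [this, h₁ u hu]
        exact hasSum_zero
    · by_cases hv : v ∈ S
      · exact (hcol v).1 (hcol' ⟨v, hv⟩)
      · have : (π · v) = 0 := funext fun u => by_contra fun h => hv (hπ u v h).2
        rw [this, h₂ v hv]
        exact hasSum_zero
  · rintro ⟨hpos, hrow', hcol'⟩
    exact ⟨fun a b => hpos a b, fun a => (hrow a).2 (hrow' a), fun b => (hcol b).2 (hcol' b)⟩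

lemma cost_restrict (G : SimpleGraph V) (H : SimpleGraph S)
    (hπ : ∀ u v, π u v ≠ 0 → u ∈ S ∧ v ∈ S)
    (hdist : ∀ a b : S, π a b ≠ 0 → H.dist a b = G.dist a b) :
    cost H (fun a b : S => π a b) = cost G π := by
  have hinj : Function.Injective (Prod.map ((↑) : S → V) ((↑) : S → V)) :=
    Subtype.val_injective.prodMap Subtype.val_injective
  unfold cost
  rw [← hinj.tsum_eq (f := fun p : V × V => (G.dist p.1 p.2 : ℝ) * π p.1 p.2)]
  · refine tsum_congr fun q => ?_
    by_cases h : π q.1 q.2 = 0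
    · simp [h]
    · simp [hdist q.1 q.2 h]
  · intro p hp
    obtain ⟨h₁, h₂⟩ := hπ p.1 p.2 (right_ne_zero_of_mul hp)
    exact ⟨(⟨p.1, h₁⟩, ⟨p.2, h₂⟩), rfl⟩

theorem W1_restrict (G : SimpleGraph V) (H : SimpleGraph S)
    (h₁ : ∀ u ∉ S, μ₁ u = 0) (h₂ : ∀ v ∉ S, μ₂ v = 0)
    (hdist : ∀ a b : S, μ₁ a ≠ 0 → μ₂ b ≠ 0 → H.dist a b = G.dist a b) :
    W1 H (fun a : S => μ₁ a) (fun b : S => μ₂ b) = W1 G μ₁ μ₂ := by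
  unfold W1
  congr 1
  ext c
  constructor
  · rintro ⟨π', hπ', rfl⟩
    let π : V → V → ℝ := fun u v => if h : u ∈ S ∧ v ∈ S then π' ⟨u, h.1⟩ ⟨v, h.2⟩ else 0
    have hres : (fun a b : S => π a b) = π' := by
      funext a b
      simp [π]
    have hsupp (u v : V) (h : π u v ≠ 0) : u ∈ S ∧ v ∈ S := by_contra fun h' => h (dif_neg h')
    refine ⟨π, (isPlan_restrict_iff h₁ h₂ hsupp).1 (hres ▸ hπ'), ?_⟩
    rw [← cost_restrict G H hsupp, hres]
    intro a b hab
    replace hab : π' a b ≠ 0 := by simpa [π] using hab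
    exact hdist a b (hπ'.ne_zero_of_ne_zero hab).1 (hπ'.ne_zero_of_ne_zero hab).2
  · rintro ⟨π, hπ, rfl⟩
    have hsupp (u v : V) (h : π u v ≠ 0) : u ∈ S ∧ v ∈ S :=
      ⟨by_contra fun hu => (hπ.ne_zero_of_ne_zero h).1 (h₁ u hu),
        by_contra fun hv => (hπ.ne_zero_of_ne_zero h).2 (h₂ v hv)⟩
    refine ⟨_, (isPlan_restrict_iff h₁ h₂ hsupp).2 hπ, cost_restrict G H hsupp fun a b hab => ?_⟩
    exact hdist a b (hπ.ne_zero_of_ne_zero hab).1 (hπ.ne_zero_of_ne_zero hab).2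

end Transport

def coreNeighborhood (G : SimpleGraph V) (x y : V) : Set V :=
  G.neighborSet x ∪ G.neighborSet y ∪ {i | G.dist x i = 2 ∧ G.dist y i = 2}

section Graph

variable {G : SimpleGraph V}

lemma mu_induce {S : Set V} {a : V} (ha : a ∈ S) (hS : G.neighborSet a ⊆ S) (α : ℝ) :
    mu (G.induce S) α ⟨a, ha⟩ = fun b : S => mu G α a b := by
  funext b
  simp [mu, Subtype.ext_iff, ncard_neighborSet_induce_of_neighborSet_subset ha hS]

lemma dist_le_one_of_mu_ne_zero {α : ℝ} {a u : V} (h : mu G α a u ≠ 0) : G.dist a u ≤ 1 := by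
  by_cases hu : u = a
  · simp [hu]
  by_cases hadj : G.Adj a u
  · exact (dist_eq_one_iff_adj.mpr hadj).le
  · simp [mu, hu, hadj] at h

variable {x y : V}

lemma mem_coreNeighborhood_of_dist_le_two (hconn : G.Connected) (hadj : G.Adj x y) {w : V}
    (hx : G.dist x w ≤ 2) (hy : G.dist y w ≤ 2) : w ∈ coreNeighborhood G x y := by
  rcases eq_or_ne w x with rfl | hwx
  · exact Or.inl (Or.inr hadj.symm)
  rcases eq_or_ne w y with rfl | hwy
  · exact Or.inl (Or.inl hadj)
  have hx0 := hconn.pos_dist_of_ne (Ne.symm hwx)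
  have hy0 := hconn.pos_dist_of_ne (Ne.symm hwy)
  by_cases hx1 : G.dist x w = 1
  · exact Or.inl (Or.inl (dist_eq_one_iff_adj.mp hx1))
  by_cases hy1 : G.dist y w = 1
  · exact Or.inl (Or.inr (dist_eq_one_iff_adj.mp hy1))
  exact Or.inr ⟨by omega, by omega⟩

lemma mem_coreNeighborhood_of_dist_le_one (hconn : G.Connected) (hadj : G.Adj x y) {u : V}
    (h : G.dist x u ≤ 1 ∨ G.dist y u ≤ 1) : u ∈ coreNeighborhood G x y := by
  have hxy : G.dist x y = 1 := dist_eq_one_iff_adj.mpr hadj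
  have hyx : G.dist y x = 1 := dist_eq_one_iff_adj.mpr hadj.symm
  have hx := hconn.dist_triangle (u := x) (v := y) (w := u)
  have hy := hconn.dist_triangle (u := y) (v := x) (w := u)
  exact mem_coreNeighborhood_of_dist_le_two hconn hadj (by omega) (by omega)

lemma exists_walk_coreNeighborhood (hconn : G.Connected) (hadj : G.Adj x y) {u v : V}
    (hu : G.dist x u ≤ 1) (hv : G.dist y v ≤ 1) :
    ∃ p : G.Walk u v, p.length = G.dist u v ∧ ∀ w ∈ p.support, w ∈ coreNeighborhood G x y := by
  have hxy : G.dist x y = 1 := dist_eq_one_iff_adj.mpr hadj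
  have hux : G.dist u v ≤ G.dist x u + G.dist x v :=
    dist_comm (u := x) ▸ hconn.dist_triangle
  have hxv : G.dist x v ≤ G.dist x y + G.dist y v := hconn.dist_triangle
  by_cases hshort : G.dist u v ≤ 2
  · obtain ⟨p, hp⟩ := hconn.exists_walk_length_eq_dist u v
    refine ⟨p, hp, fun w hw => ?_⟩
    have hsplit := p.dist_add_dist_le_length hw
    have h₁ := hconn.dist_triangle (u := x) (v := u) (w := w)
    have h₂ := hconn.dist_triangle (u := y) (v := v) (w := w)
    have hwv : G.dist w v = G.dist v w := dist_comm
    have h₃ := hconn.dist_triangle (u := x) (v := y) (w := w)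
    have h₄ : G.dist y w ≤ G.dist x y + G.dist x w :=
      dist_comm (u := x) ▸ hconn.dist_triangle
    exact mem_coreNeighborhood_of_dist_le_two hconn hadj (by omega) (by omega)
  · -- `d(u,v) = 3` forces `u ~ x` and `y ~ v`
    have hxu : G.Adj x u := dist_eq_one_iff_adj.mp (by omega)
    have hyv : G.Adj y v := dist_eq_one_iff_adj.mp (by omega)
    refine ⟨.cons hxu.symm (.cons hadj (.cons hyv .nil)), by simp; omega, ?_⟩
    simp only [Walk.support_cons, Walk.support_nil, List.mem_cons, List.not_mem_nil, or_false]
    rintro w (rfl | rfl | rfl | rfl)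
    · exact Or.inl (Or.inl hxu)
    · exact Or.inl (Or.inr hadj.symm)
    · exact Or.inl (Or.inl hadj)
    · exact Or.inl (Or.inr hyv)

lemma dist_induce_coreNeighborhood (hconn : G.Connected) (hadj : G.Adj x y)
    (a b : coreNeighborhood G x y) (ha : G.dist x a ≤ 1) (hb : G.dist y b ≤ 1) :
    (G.induce (coreNeighborhood G x y)).dist a b = G.dist a b := by
  obtain ⟨p, hp, hS⟩ := exists_walk_coreNeighborhood hconn hadj ha hb
  exact dist_induce_eq_of_walk p hp hS

end Graph

end OllivierRicci

/-- Reduction Lemma — the α-Ollivier-Ricci curvature of an edge only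
depends on the core neighborhood. -/
theorem OllivierRicci.kappaAlpha_induce_core {V : Type*} (G : SimpleGraph V)
    (hconn : G.Connected) (x y : V) (hadj : G.Adj x y)
    (α : ℝ) :
    OllivierRicci.kappaAlpha G α x y =
      OllivierRicci.kappaAlpha
        (G.induce (G.neighborSet x ∪ G.neighborSet y ∪
          {i | G.dist x i = 2 ∧ G.dist y i = 2}))
        α ⟨x, by left; right; exact hadj.symm⟩ ⟨y, by left; left; exact hadj⟩ := by
  open OllivierRicci SimpleGraph in
  have hx : x ∈ coreNeighborhood G x y := Or.inl (Or.inr hadj.symm)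
  have hy : y ∈ coreNeighborhood G x y := Or.inl (Or.inl hadj)
  have hxy : (G.induce (coreNeighborhood G x y)).Adj ⟨x, hx⟩ ⟨y, hy⟩ := hadj
  change kappaAlpha G α x y = kappaAlpha (G.induce (coreNeighborhood G x y)) α ⟨x, hx⟩ ⟨y, hy⟩
  unfold kappaAlpha
  rw [dist_eq_one_iff_adj.mpr hadj, dist_eq_one_iff_adj.mpr hxy,
    mu_induce hx fun _ h => Or.inl (Or.inl h), mu_induce hy fun _ h => Or.inl (Or.inr h),
    W1_restrict]
  · exact fun u hu => by_contra fun h => hu <|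
      mem_coreNeighborhood_of_dist_le_one hconn hadj (.inl (dist_le_one_of_mu_ne_zero h))
  · exact fun u hu => by_contra fun h => hu <|
      mem_coreNeighborhood_of_dist_le_one hconn hadj (.inr (dist_le_one_of_mu_ne_zero h))
  · exact fun a b ha hb => dist_induce_coreNeighborhood hconn hadj a b
      (dist_le_one_of_mu_ne_zero ha) (dist_le_one_of_mu_ne_zero hb)
end
end

section
/- Let G be a locally finite graph and x ~ y adjacent vertices of equal degree d. For every α ∈ [1/(d+1), 1], the α-Ollivier-Ricci curvature satisfies κ_α(x,y) = ((1−α)/d)·(d + 1 − inf_{φ} ∑_{z ∈ R_x(x,y)} d(z, φ(z))), where the infimum runs over all bijections φ : R_x(x,y) → R_y(x,y). -/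
open scoped Classical BigOperators

noncomputable section

/-!
Write `β = (1 - α) / d`, `N[v]` for the closed neighbourhood of `v` and `C` for the optimal
assignment cost between `R_x = N[x] \ N[y]` and `R_y = N[y] \ N[x]`. Then
`μ_x = (α - β) δ_x + β 1_{N[x] ∩ N[y]} + β 1_{R_x}`, and symmetrically for `μ_y`.

Upper bound: leave the mass on `N[x] ∩ N[y]` in place, ship `α - β` along the edge `xy` and match
`R_x` with `R_y` optimally; this costs `(α - β) + β C`.

Lower bound: because the cost is a metric, any plan can be modified without increasing its cost
until it keeps the mass `β` in place at every point of `N[x] ∩ N[y]`; then, because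
`d(u, v) + d(x, y) ≤ d(u, y) + d(x, v)` for `u ∈ R_x` and `v ∈ R_y`, until it also ships `α - β`
directly from `x` to `y`. What remains is `β` times a doubly stochastic matrix on `R_x × R_y`,
which costs at least `β C` by Birkhoff's theorem.
-/

namespace OllivierRicci

open Finset SimpleGraph

variable {V : Type*}

/-- Only the marginals on `U` are constrained; entries outside `U × U` play no role. -/
structure IsPlanOn (U : Finset V) (μ ν : V → ℝ) (π : V → V → ℝ) : Prop where
  nonneg : ∀ p q, 0 ≤ π p q
  sum_left : ∀ p ∈ U, ∑ q ∈ U, π p q = μ p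
  sum_right : ∀ q ∈ U, ∑ p ∈ U, π p q = ν q

def costOn (c : V → V → ℝ) (U : Finset V) (π : V → V → ℝ) : ℝ :=
  ∑ p ∈ U, ∑ q ∈ U, c p q * π p q

def massOn (S : Finset V) (m : ℝ) : V → ℝ := fun p => if p ∈ S then m else 0

theorem massOn_eq_add (P Q : Finset V) (m : ℝ) :
    massOn P m = massOn (P \ Q) m + massOn (P ∩ Q) m := by
  ext p
  by_cases hP : p ∈ P <;> by_cases hQ : p ∈ Q <;> simp [massOn, hP, hQ]

section PlansOn

variable {U : Finset V} {μ ν : V → ℝ} {π : V → V → ℝ} {c : V → V → ℝ}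

theorem IsPlanOn.congr (hπ : IsPlanOn U μ ν π) {μ' ν' : V → ℝ} (hμ : ∀ p ∈ U, μ p = μ' p)
    (hν : ∀ q ∈ U, ν q = ν' q) : IsPlanOn U μ' ν' π :=
  ⟨hπ.nonneg, fun p hp => (hπ.sum_left p hp).trans (hμ p hp),
    fun q hq => (hπ.sum_right q hq).trans (hν q hq)⟩

theorem IsPlanOn.eq_zero_of_left (hπ : IsPlanOn U μ ν π) {p q : V} (hp : p ∈ U) (hq : q ∈ U)
    (hμ : μ p = 0) : π p q = 0 :=
  (sum_eq_zero_iff_of_nonneg fun q _ => hπ.nonneg p q).mp ((hπ.sum_left p hp).trans hμ) q hq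

theorem IsPlanOn.eq_zero_of_right (hπ : IsPlanOn U μ ν π) {p q : V} (hp : p ∈ U) (hq : q ∈ U)
    (hν : ν q = 0) : π p q = 0 :=
  (sum_eq_zero_iff_of_nonneg fun p _ => hπ.nonneg p q).mp ((hπ.sum_right q hq).trans hν) p hp

theorem IsPlanOn.add {μ' ν' : V → ℝ} {π' : V → V → ℝ} (hπ : IsPlanOn U μ ν π)
    (hπ' : IsPlanOn U μ' ν' π') : IsPlanOn U (μ + μ') (ν + ν') (π + π') :=
  ⟨fun p q => add_nonneg (hπ.nonneg p q) (hπ'.nonneg p q),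
    fun p hp => by simp [sum_add_distrib, hπ.sum_left p hp, hπ'.sum_left p hp],
    fun q hq => by simp [sum_add_distrib, hπ.sum_right q hq, hπ'.sum_right q hq]⟩

theorem IsPlanOn.add_single (hπ : IsPlanOn U μ ν π) {x y : V} (hx : x ∈ U) (hy : y ∈ U)
    {a : ℝ} (ha : 0 ≤ π x y + a) :
    IsPlanOn U (μ + Pi.single x a) (ν + Pi.single y a)
      (fun p q => π p q + if p = x ∧ q = y then a else 0) := by
  refine ⟨fun p q => ?_, fun p hp => ?_, fun q hq => ?_⟩
  · by_cases h : p = x ∧ q = y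
    · simpa [h.1, h.2] using ha
    · simpa [h] using hπ.nonneg p q
  · rcases eq_or_ne p x with rfl | hpx
    · simp [sum_add_distrib, hπ.sum_left p hp, hy]
    · simp [hπ.sum_left p hp, hpx]
  · rcases eq_or_ne q y with rfl | hqy
    · simp [sum_add_distrib, hπ.sum_right q hq, hx]
    · simp [hπ.sum_right q hq, hqy]

theorem IsPlanOn.add_rankOne (hπ : IsPlanOn U μ ν π) {f g : V → ℝ}
    (hnonneg : ∀ p q, 0 ≤ π p q + f p * g q) (hf : ∑ p ∈ U, f p = 0) (hg : ∑ q ∈ U, g q = 0) :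
    IsPlanOn U μ ν (fun p q => π p q + f p * g q) :=
  ⟨hnonneg, fun p hp => by simp [sum_add_distrib, ← mul_sum, hg, hπ.sum_left p hp],
    fun q hq => by simp [sum_add_distrib, ← sum_mul, hf, hπ.sum_right q hq]⟩

theorem isPlanOn_graph {A B : Finset V} (hA : A ⊆ U) (hB : B ⊆ U) {φ : V → V}
    (hφ : Set.BijOn φ A B) {m : ℝ} (hm : 0 ≤ m) :
    IsPlanOn U (massOn A m) (massOn B m) (fun p q => if p ∈ A ∧ q = φ p then m else 0) := by
  refine ⟨fun p q => by positivity, fun p _ => ?_, fun q _ => ?_⟩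
  · by_cases hp : p ∈ A
    · simp [massOn, hp, hB (hφ.mapsTo hp)]
    · simp [massOn, hp]
  · by_cases hqB : q ∈ B
    · obtain ⟨a, ha, rfl⟩ := hφ.surjOn hqB
      rw [sum_eq_single_of_mem a (hA ha), if_pos ⟨ha, rfl⟩, massOn, if_pos hqB]
      rintro p - hpa
      exact if_neg fun h => hpa (hφ.injOn h.1 ha h.2.symm)
    · rw [massOn, if_neg hqB]
      exact sum_eq_zero fun p _ => if_neg fun h : p ∈ A ∧ q = φ p =>
        hqB (h.2 ▸ hφ.mapsTo h.1)

theorem costOn_add (π' : V → V → ℝ) : costOn c U (π + π') = costOn c U π + costOn c U π' := by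
  simp [costOn, mul_add, sum_add_distrib]

theorem costOn_add_single {x y : V} (hx : x ∈ U) (hy : y ∈ U) (a : ℝ) :
    costOn c U (fun p q => π p q + if p = x ∧ q = y then a else 0)
      = costOn c U π + c x y * a := by
  simp [costOn, mul_add, sum_add_distrib, ite_and, hx, hy]

theorem costOn_add_rankOne (f g : V → ℝ) :
    costOn c U (fun p q => π p q + f p * g q)
      = costOn c U π + ∑ p ∈ U, ∑ q ∈ U, c p q * (f p * g q) := by
  simp [costOn, mul_add, sum_add_distrib]

theorem costOn_graph {A B : Finset V} (hA : A ⊆ U) (hB : B ⊆ U) {φ : V → V}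
    (hφ : Set.MapsTo φ A B) (m : ℝ) :
    costOn c U (fun p q => if p ∈ A ∧ q = φ p then m else 0) = m * ∑ a ∈ A, c a (φ a) := by
  rw [costOn, mul_sum, ← sum_subset hA fun p _ hpA => sum_eq_zero fun q _ => by simp [hpA]]
  refine sum_congr rfl fun a ha => ?_
  rw [sum_eq_single_of_mem (φ a) (hB (hφ ha)) fun q _ hq => by simp [hq]]
  simp [ha, mul_comm]

theorem IsPlan.mem_of_ne_zero (hπ : IsPlan μ ν π) (hμ : ∀ p ∉ U, μ p = 0)
    (hν : ∀ q ∉ U, ν q = 0) {p q : V} (hpq : π p q ≠ 0) : p ∈ U ∧ q ∈ U := by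
  have hle_left : π p q ≤ μ p := le_hasSum (hπ.2.1 p) q fun j _ => hπ.1 p j
  have hle_right : π p q ≤ ν q := le_hasSum (hπ.2.2 q) p fun j _ => hπ.1 j q
  refine ⟨by_contra fun hp => hpq ?_, by_contra fun hq => hpq ?_⟩
  · exact le_antisymm (hle_left.trans (hμ p hp).le) (hπ.1 p q)
  · exact le_antisymm (hle_right.trans (hν q hq).le) (hπ.1 p q)

theorem IsPlan.isPlanOn (hπ : IsPlan μ ν π) (hμ : ∀ p ∉ U, μ p = 0) (hν : ∀ q ∉ U, ν q = 0) :
    IsPlanOn U μ ν π := by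
  refine ⟨hπ.1, fun p _ => ?_, fun q _ => ?_⟩
  · refine HasSum.unique (hasSum_sum_of_ne_finset_zero fun q hq => ?_) (hπ.2.1 p)
    exact by_contra fun h => hq (hπ.mem_of_ne_zero hμ hν h).2
  · refine HasSum.unique (hasSum_sum_of_ne_finset_zero fun p hp => ?_) (hπ.2.2 q)
    exact by_contra fun h => hp (hπ.mem_of_ne_zero hμ hν h).1

theorem cost_eq_costOn (G : SimpleGraph V) (hπ : ∀ p q, π p q ≠ 0 → p ∈ U ∧ q ∈ U) :
    cost G π = costOn (fun p q => (G.dist p q : ℝ)) U π := by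
  rw [cost, costOn, ← sum_product']
  refine tsum_eq_sum fun pq hpq => ?_
  rcases eq_or_ne (π pq.1 pq.2) 0 with h | h
  · simp [h]
  · exact absurd (mem_product.2 (hπ _ _ h)) hpq

theorem IsPlanOn.exists_isPlan (G : SimpleGraph V) (hπ : IsPlanOn U μ ν π)
    (hμ : ∀ p ∉ U, μ p = 0) (hν : ∀ q ∉ U, ν q = 0) :
    ∃ π', IsPlan μ ν π' ∧ cost G π' = costOn (fun p q => (G.dist p q : ℝ)) U π := by
  set π' : V → V → ℝ := fun p q => if p ∈ U ∧ q ∈ U then π p q else 0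
  have hsupp : ∀ p q, π' p q ≠ 0 → p ∈ U ∧ q ∈ U := fun p q h => by
    by_contra h'
    exact h (if_neg h')
  refine ⟨π', ⟨fun p q => ?_, fun p => ?_, fun q => ?_⟩, ?_⟩
  · by_cases h : p ∈ U ∧ q ∈ U <;> simp [π', h, hπ.nonneg p q]
  · by_cases hp : p ∈ U
    · have h : HasSum (fun q => π' p q) (∑ q ∈ U, π' p q) :=
        hasSum_sum_of_ne_finset_zero fun q hq => by simp [π', hq]
      rwa [sum_congr rfl fun q hq => if_pos ⟨hp, hq⟩, hπ.sum_left p hp] at h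
    · simp [π', hp, hμ p hp]
  · by_cases hq : q ∈ U
    · have h : HasSum (fun p => π' p q) (∑ p ∈ U, π' p q) :=
        hasSum_sum_of_ne_finset_zero fun p hp => by simp [π', hp]
      rwa [sum_congr rfl fun p hp => if_pos ⟨hp, hq⟩, hπ.sum_right q hq] at h
    · simp [π', hq, hν q hq]
  · rw [cost_eq_costOn G hsupp]
    exact sum_congr rfl fun p hp => sum_congr rfl fun q hq => by simp [π', hp, hq]

theorem W1_eq_of_isPlanOn (G : SimpleGraph V) (hμ : ∀ p ∉ U, μ p = 0) (hν : ∀ q ∉ U, ν q = 0)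
    {w : ℝ} (hw : ∃ π, IsPlanOn U μ ν π ∧ costOn (fun p q => (G.dist p q : ℝ)) U π = w)
    (hle : ∀ π, IsPlanOn U μ ν π → w ≤ costOn (fun p q => (G.dist p q : ℝ)) U π) :
    W1 G μ ν = w := by
  refine IsLeast.csInf_eq ⟨?_, ?_⟩
  · obtain ⟨π, hπ, rfl⟩ := hw
    exact hπ.exists_isPlan G hμ hν
  · rintro _ ⟨π, hπ, rfl⟩
    rw [cost_eq_costOn G fun p q => hπ.mem_of_ne_zero hμ hν]
    exact hle π (hπ.isPlanOn hμ hν)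

end PlansOn

section Exchange

variable {U : Finset V} {μ ν : V → ℝ} {π : V → V → ℝ} {c : V → V → ℝ} {x y : V}

theorem sum_sum_mul_exchange (hx : x ∈ U) (hy : y ∈ U) {s r : V → ℝ} {K R : ℝ}
    (hK : ∑ p ∈ U, s p = K) (hR : ∑ q ∈ U, r q = R) :
    ∑ p ∈ U, ∑ q ∈ U, c p q * (((K * if p = x then 1 else 0) - s p) *
        ((R * if q = y then 1 else 0) - r q))
      = ∑ p ∈ U, ∑ q ∈ U, s p * r q * (c p q + c x y - c p y - c x q) := by
  have lhs : ∀ p q, c p q * (((K * if p = x then 1 else 0) - s p) *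
      ((R * if q = y then 1 else 0) - r q))
      = K * R * ((if p = x then 1 else 0) * ((if q = y then 1 else 0) * c p q))
        - K * ((if p = x then 1 else 0) * (r q * c p q))
        - R * (s p * ((if q = y then 1 else 0) * c p q)) + s p * (r q * c p q) := by
    intros; ring
  have rhs : ∀ p q, s p * r q * (c p q + c x y - c p y - c x q)
      = s p * (r q * c p q) + c x y * s p * r q - s p * c p y * r q - r q * c x q * s p := by
    intros; ring
  simp only [lhs, rhs, sum_add_distrib, sum_sub_distrib, ← mul_sum]
  simp only [ite_mul, one_mul, zero_mul, sum_ite_eq', hx, hy, if_true, ← sum_mul, ← mul_sum, hK,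
    hR]
  ring

def offCol (π : V → V → ℝ) (x y p : V) : ℝ := π p y - if p = x then π x y else 0

def offRow (π : V → V → ℝ) (x y q : V) : ℝ := π x q - if q = y then π x y else 0

theorem offCol_of_ne {p : V} (hp : p ≠ x) : offCol π x y p = π p y := by simp [offCol, hp]

theorem offRow_of_ne {q : V} (hq : q ≠ y) : offRow π x y q = π x q := by simp [offRow, hq]

@[simp] theorem offCol_self : offCol π x y x = 0 := by simp [offCol]

@[simp] theorem offRow_self : offRow π x y y = 0 := by simp [offRow]

theorem IsPlanOn.sum_offCol (hπ : IsPlanOn U μ ν π) (hx : x ∈ U) (hy : y ∈ U) :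
    ∑ p ∈ U, offCol π x y p = ν y - π x y := by
  simp [offCol, sum_sub_distrib, hπ.sum_right y hy, hx]

theorem IsPlanOn.sum_offRow (hπ : IsPlanOn U μ ν π) (hx : x ∈ U) (hy : y ∈ U) :
    ∑ q ∈ U, offRow π x y q = μ x - π x y := by
  simp [offRow, sum_sub_distrib, hπ.sum_left x hx, hy]

theorem exchange_nonneg (hπ : ∀ p q, 0 ≤ π p q) {t K R : ℝ} (ht : 0 ≤ t) (hK : 0 ≤ K)
    (hR : 0 ≤ R) (htK : t * K ≤ 1) (htR : t * R ≤ 1) (p q : V) :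
    0 ≤ π p q + t * ((K * if p = x then 1 else 0) - offCol π x y p) *
      ((R * if q = y then 1 else 0) - offRow π x y q) := by
  rcases eq_or_ne p x with rfl | hpx <;> rcases eq_or_ne q y with rfl | hqy
  · simp only [offCol_self, offRow_self, if_true, mul_one, sub_zero]
    exact add_nonneg (hπ _ _) (mul_nonneg (mul_nonneg ht hK) hR)
  · simp only [offCol_self, offRow_of_ne hqy, if_true, if_neg hqy, mul_one, mul_zero, sub_zero,
      zero_sub]
    nlinarith [mul_nonneg (sub_nonneg.2 htK) (hπ p q)]
  · simp only [offCol_of_ne hpx, offRow_self, if_true, if_neg hpx, mul_one, mul_zero, sub_zero,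
      zero_sub]
    nlinarith [mul_nonneg (sub_nonneg.2 htR) (hπ p q)]
  · simp only [offCol_of_ne hpx, offRow_of_ne hqy, if_neg hpx, if_neg hqy, mul_zero, zero_sub]
    nlinarith [mul_nonneg (mul_nonneg ht (hπ p y)) (hπ x q), hπ p q]

theorem sum_exchange_nonpos (hπ : ∀ p q, 0 ≤ π p q)
    (hc : ∀ p ∈ U, ∀ q ∈ U, π p y ≠ 0 → π x q ≠ 0 → c p q + c x y ≤ c p y + c x q) :
    ∑ p ∈ U, ∑ q ∈ U, offCol π x y p * offRow π x y q * (c p q + c x y - c p y - c x q)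
      ≤ 0 := by
  refine sum_nonpos fun p hp => sum_nonpos fun q hq => ?_
  rcases eq_or_ne (offCol π x y p * offRow π x y q) 0 with h0 | h0
  · simp [h0]
  have hpx : p ≠ x := fun h => h0 (by simp [h])
  have hqy : q ≠ y := fun h => h0 (by simp [h])
  rw [offCol_of_ne hpx, offRow_of_ne hqy] at h0 ⊢
  exact mul_nonpos_of_nonneg_of_nonpos (mul_nonneg (hπ p y) (hπ x q))
    (by linarith [hc p hp q hq (left_ne_zero_of_mul h0) (right_ne_zero_of_mul h0)])

/-- With `s`, `r` the column `y` and row `x` of `π` off `(x, y)` and `K`, `R` their sums, the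
added matrix `t (K e_x - s) ⊗ (R e_y - r)` equals
`t ∑ s p r q (e_x ⊗ e_y + e_p ⊗ e_q - e_p ⊗ e_y - e_x ⊗ e_q)`: a nonnegative combination of
exchanges `(p, y), (x, q) ↦ (x, y), (p, q)`, none of which increases the cost. -/
theorem IsPlanOn.exists_le_apply (hπ : IsPlanOn U μ ν π) (hx : x ∈ U) (hy : y ∈ U)
    {a : ℝ} (hax : a ≤ μ x) (hay : a ≤ ν y)
    (hc : ∀ p ∈ U, ∀ q ∈ U, π p y ≠ 0 → π x q ≠ 0 → c p q + c x y ≤ c p y + c x q) :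
    ∃ π', IsPlanOn U μ ν π' ∧ a ≤ π' x y ∧ costOn c U π' ≤ costOn c U π := by
  by_cases hab : a ≤ π x y
  · exact ⟨π, hπ, hab, le_rfl⟩
  replace hab := not_le.mp hab
  set K := ν y - π x y
  set R := μ x - π x y
  have hK : 0 < K := by linarith
  have hR : 0 < R := by linarith
  set t := (a - π x y) / (K * R)
  have ht : 0 ≤ t := div_nonneg (by linarith) (by positivity)
  have htK : t * K ≤ 1 := by
    rw [div_mul_eq_mul_div, div_le_one (by positivity)]
    nlinarith
  have htR : t * R ≤ 1 := by
    rw [div_mul_eq_mul_div, div_le_one (by positivity)]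
    nlinarith
  set f : V → ℝ := fun p => t * ((K * if p = x then 1 else 0) - offCol π x y p)
  set g : V → ℝ := fun q => (R * if q = y then 1 else 0) - offRow π x y q
  have hnonneg : ∀ p q, 0 ≤ π p q + f p * g q := fun p q => by
    simpa only [f, g, mul_assoc] using exchange_nonneg hπ.nonneg ht hK.le hR.le htK htR p q
  refine ⟨fun p q => π p q + f p * g q, hπ.add_rankOne hnonneg ?_ ?_, ?_, ?_⟩
  · simp [f, ← mul_sum, sum_sub_distrib, hπ.sum_offCol hx hy, hx, K]
  · simp [g, sum_sub_distrib, hπ.sum_offRow hx hy, hy, R]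
  · simp only [f, g, offCol_self, offRow_self, if_true, mul_one, sub_zero, t]
    field_simp
    linarith
  · have hcost : ∑ p ∈ U, ∑ q ∈ U, c p q * (f p * g q) = t * ∑ p ∈ U, ∑ q ∈ U,
        offCol π x y p * offRow π x y q * (c p q + c x y - c p y - c x q) := by
      rw [← sum_sum_mul_exchange hx hy (hπ.sum_offCol hx hy) (hπ.sum_offRow hx hy), mul_sum]
      refine sum_congr rfl fun p _ => ?_
      rw [mul_sum]
      exact sum_congr rfl fun q _ => by simp only [f, g]; ring
    rw [costOn_add_rankOne, hcost]
    linarith [mul_nonpos_of_nonneg_of_nonpos ht (sum_exchange_nonpos hπ.nonneg hc)]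

theorem IsPlanOn.exists_sub_single (hπ : IsPlanOn U μ ν π) (hx : x ∈ U) (hy : y ∈ U)
    {a : ℝ} (hax : a ≤ μ x) (hay : a ≤ ν y)
    (hc : ∀ p ∈ U, ∀ q ∈ U, π p y ≠ 0 → π x q ≠ 0 → c p q + c x y ≤ c p y + c x q) :
    ∃ π', IsPlanOn U (μ - Pi.single x a) (ν - Pi.single y a) π' ∧
      costOn c U π' + c x y * a ≤ costOn c U π := by
  obtain ⟨π₁, hπ₁, hle, hcost⟩ := hπ.exists_le_apply hx hy hax hay hc
  refine ⟨fun p q => π₁ p q + if p = x ∧ q = y then -a else 0, ?_, ?_⟩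
  · simpa [sub_eq_add_neg, Pi.single_neg] using hπ₁.add_single hx hy (a := -a) (by linarith)
  · rw [costOn_add_single hx hy]
    linarith

theorem IsPlanOn.exists_sub_massOn (htri : ∀ p z q, c p q ≤ c p z + c z q)
    (hc0 : ∀ z, c z z = 0) {m : ℝ} {Z : Finset V} (hZ : Z ⊆ U) (hπ : IsPlanOn U μ ν π)
    (hmZ : ∀ z ∈ Z, m ≤ μ z ∧ m ≤ ν z) :
    ∃ π', IsPlanOn U (μ - massOn Z m) (ν - massOn Z m) π' ∧ costOn c U π' ≤ costOn c U π := by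
  induction Z using Finset.induction_on generalizing μ ν π with
  | empty => exact ⟨π, hπ.congr (by simp [massOn]) (by simp [massOn]), le_rfl⟩
  | insert z Z hz ih =>
    have hzU : z ∈ U := hZ (mem_insert_self z Z)
    obtain ⟨π₁, hπ₁, hcost₁⟩ := hπ.exists_sub_single hzU hzU (hmZ z (mem_insert_self z Z)).1
      (hmZ z (mem_insert_self z Z)).2 fun p _ q _ _ _ => by linarith [htri p z q, hc0 z]
    obtain ⟨π₂, hπ₂, hcost₂⟩ := ih ((subset_insert z Z).trans hZ) hπ₁ fun w hw => by
      have hwz : w ≠ z := fun h => hz (h ▸ hw)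
      simpa [Pi.single_apply, hwz] using hmZ w (mem_insert_of_mem hw)
    rw [hc0, zero_mul, add_zero] at hcost₁
    refine ⟨π₂, ?_, hcost₂.trans hcost₁⟩
    convert hπ₂ using 1 <;>
    · ext p
      by_cases hpz : p = z
      · simp [massOn, hpz, hz]
      · simp [massOn, hpz]

end Exchange

section Birkhoff

theorem le_sum_mul_of_mem_doublyStochastic {n : Type*} [Fintype n] [DecidableEq n]
    {M : Matrix n n ℝ} (hM : M ∈ doublyStochastic ℝ n) (c : n → n → ℝ) {L : ℝ}
    (hL : ∀ σ : Equiv.Perm n, L ≤ ∑ i, c i (σ i)) : L ≤ ∑ i, ∑ j, c i j * M i j := by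
  let f : Matrix n n ℝ →ₗ[ℝ] ℝ := ∑ i, ∑ j, c i j • Matrix.entryLinearMap ℝ ℝ i j
  have hf : ∀ N, f N = ∑ i, ∑ j, c i j * N i j := fun N => by simp [f]
  rw [← SetLike.mem_coe, doublyStochastic_eq_convexHull_permMatrix] at hM
  obtain ⟨_, ⟨σ, rfl⟩, hσ⟩ :=
    (f.concaveOn convex_univ).exists_le_of_mem_convexHull (Set.subset_univ _) hM
  calc L ≤ ∑ i, c i (σ i) := hL σ
    _ = f (σ.permMatrix ℝ) := by simp [hf, Equiv.toPEquiv_apply]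
    _ ≤ f M := hσ
    _ = _ := hf M

theorem exists_bijOn_of_equiv {A B : Finset V} (e : A ≃ B) :
    ∃ φ : V → V, Set.BijOn φ A B ∧ ∀ a : A, φ a = e a := by
  refine ⟨Function.extend Subtype.val (fun a : A => (e a : V)) id, ?_,
    Subtype.val_injective.extend_apply _ _⟩
  have hφ : ∀ a : A, Function.extend Subtype.val (fun a : A => (e a : V)) id a = e a :=
    Subtype.val_injective.extend_apply _ _
  refine ⟨fun a ha => ?_, fun a ha a' ha' h => ?_, fun b hb => ?_⟩
  · simp [hφ ⟨a, ha⟩]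
  · rw [hφ ⟨a, ha⟩, hφ ⟨a', ha'⟩] at h
    exact congrArg Subtype.val (e.injective (Subtype.ext h))
  · exact ⟨e.symm ⟨b, hb⟩, (e.symm ⟨b, hb⟩).2, by simp⟩

theorem mul_le_sum_sum_of_bijOn {A B : Finset V} {π : V → V → ℝ} (hπ : ∀ a b, 0 ≤ π a b)
    {m : ℝ} (hm : 0 < m) (hrow : ∀ a ∈ A, ∑ b ∈ B, π a b = m)
    (hcol : ∀ b ∈ B, ∑ a ∈ A, π a b = m) (c : V → V → ℝ) {L : ℝ}
    (hL : ∀ φ : V → V, Set.BijOn φ A B → L ≤ ∑ a ∈ A, c a (φ a)) :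
    m * L ≤ ∑ a ∈ A, ∑ b ∈ B, c a b * π a b := by
  have hcard : A.card = B.card := by
    have h := sum_comm (s := A) (t := B) (f := π)
    rw [sum_congr rfl hrow, sum_congr rfl hcol] at h
    simpa [hm.ne'] using h
  let e : A ≃ B := Finset.equivOfCardEq hcard
  have hsumB : ∀ f : V → ℝ, ∑ j : A, f (e j) = ∑ b ∈ B, f b := fun f =>
    (e.sum_comp fun b : B => f b).trans (sum_coe_sort B f)
  let M : Matrix A A ℝ := fun i j => π i (e j) / m
  have hM : M ∈ doublyStochastic ℝ A := by
    refine mem_doublyStochastic_iff_sum.2 ⟨fun i j => div_nonneg (hπ _ _) hm.le, fun i => ?_,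
      fun j => ?_⟩
    · simp only [M, ← sum_div, hsumB (π i), hrow i i.2, div_self hm.ne']
    · simp only [M, ← sum_div]
      rw [sum_coe_sort A (fun a => π a (e j)), hcol _ (e j).2, div_self hm.ne']
  have hperm : ∀ σ : Equiv.Perm A, L ≤ ∑ i : A, c i (e (σ i)) := fun σ => by
    obtain ⟨φ, hφ, hφe⟩ := exists_bijOn_of_equiv (σ.trans e)
    calc L ≤ ∑ a ∈ A, c a (φ a) := hL φ hφ
      _ = ∑ i : A, c i (e (σ i)) := by
        rw [← sum_coe_sort A]
        exact sum_congr rfl fun i _ => by rw [hφe]; rfl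
  calc m * L ≤ m * ∑ i : A, ∑ j : A, c i (e j) * M i j :=
        mul_le_mul_of_nonneg_left (le_sum_mul_of_mem_doublyStochastic hM _ hperm) hm.le
    _ = ∑ a ∈ A, ∑ b ∈ B, c a b * π a b := by
      rw [mul_sum, ← sum_coe_sort A]
      refine sum_congr rfl fun i _ => ?_
      rw [mul_sum, ← hsumB (fun b => c i b * π i b)]
      exact sum_congr rfl fun j _ => by simp only [M]; field_simp

theorem IsPlanOn.mul_le_costOn {U A B : Finset V} {π : V → V → ℝ} {c : V → V → ℝ} {m L : ℝ}
    (hπ : IsPlanOn U (massOn A m) (massOn B m) π) (hA : A ⊆ U) (hB : B ⊆ U) (hm : 0 ≤ m)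
    (hL : ∀ φ : V → V, Set.BijOn φ A B → L ≤ ∑ a ∈ A, c a (φ a)) :
    m * L ≤ costOn c U π := by
  have hcol : ∀ p ∈ U, ∀ q ∈ U, q ∉ B → π p q = 0 := fun p hp q hq hqB =>
    hπ.eq_zero_of_right hp hq (by simp [massOn, hqB])
  have hrow : ∀ p ∈ U, p ∉ A → ∀ q ∈ U, π p q = 0 := fun p hp hpA q hq =>
    hπ.eq_zero_of_left hp hq (by simp [massOn, hpA])
  have hcost : costOn c U π = ∑ a ∈ A, ∑ b ∈ B, c a b * π a b := by
    refine (sum_subset hA fun p hp hpA => sum_eq_zero fun q hq => ?_).symm.trans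
      (sum_congr rfl fun a ha => (sum_subset hB fun q hq hqB => ?_).symm)
    · rw [hrow p hp hpA q hq, mul_zero]
    · rw [hcol a (hA ha) q hq hqB, mul_zero]
  rcases hm.eq_or_lt with rfl | hm
  · rw [zero_mul, hcost]
    exact (sum_eq_zero fun a ha => sum_eq_zero fun b hb => by
      rw [hπ.eq_zero_of_left (hA ha) (hB hb) (by simp [massOn]), mul_zero]).ge
  rw [hcost]
  refine mul_le_sum_sum_of_bijOn hπ.nonneg hm (fun a ha => ?_) (fun b hb => ?_) c hL
  · rw [sum_subset hB fun q hq hqB => hcol a (hA ha) q hq hqB, hπ.sum_left a (hA ha), massOn,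
      if_pos ha]
  · rw [sum_subset hA fun p hp hpA => hrow p hp hpA b (hB hb), hπ.sum_right b (hB hb), massOn,
      if_pos hb]

end Birkhoff

section Assignment

variable (G : SimpleGraph V)

theorem assignCostOf_coe_finset (A : Finset V) (φ : V → V) :
    assignCostOf G A φ = ∑ a ∈ A, (G.dist a (φ a) : ℝ) :=
  finsum_mem_coe_finset _ _

theorem assignCost_le_assignCostOf {A B : Set V} {φ : V → V} (hφ : Set.BijOn φ A B) :
    assignCost G A B ≤ assignCostOf G A φ :=
  csInf_le ⟨0, by
    rintro _ ⟨ψ, -, rfl⟩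
    exact finsum_nonneg fun z => finsum_nonneg fun _ => Nat.cast_nonneg _⟩ ⟨φ, hφ, rfl⟩

theorem exists_isOptAssign {A B : Finset V} (h : A.card = B.card) :
    ∃ φ, IsOptAssign G A B φ := by
  obtain ⟨φ, hφ, -⟩ := exists_bijOn_of_equiv (Finset.equivOfCardEq h)
  set S := {c : ℝ | ∃ φ : V → V, Set.BijOn φ A B ∧ assignCostOf G A φ = c}
  have hfin : S.Finite := by
    refine (Set.finite_range fun g : A → B => ∑ a : A, (G.dist a (g a) : ℝ)).subset ?_
    rintro _ ⟨ψ, hψ, rfl⟩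
    refine ⟨fun a => ⟨ψ a, hψ.mapsTo a.2⟩, ?_⟩
    rw [assignCostOf_coe_finset, ← sum_coe_sort A]
  obtain ⟨ψ, hψ, hcost⟩ : sInf S ∈ S := Set.Nonempty.csInf_mem ⟨_, φ, hφ, rfl⟩ hfin
  exact ⟨ψ, hψ, hcost⟩

end Assignment

section Graph

variable {G : SimpleGraph V} {x y : V}

def closedNeighborFinset (G : SimpleGraph V) (x : V) [Fintype (G.neighborSet x)] : Finset V :=
  insert x (G.neighborFinset x)

variable [Fintype (G.neighborSet x)] [Fintype (G.neighborSet y)] {π : V → V → ℝ}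

@[simp] theorem mem_closedNeighborFinset {p : V} :
    p ∈ closedNeighborFinset G x ↔ p = x ∨ G.Adj x p := by
  simp [closedNeighborFinset]

theorem card_closedNeighborFinset {d : ℕ} (hd : (G.neighborSet x).ncard = d) :
    (closedNeighborFinset G x).card = d + 1 := by
  rw [closedNeighborFinset, card_insert_of_notMem (by simp), ← hd,
    ← Set.ncard_coe_finset, coe_neighborFinset]

theorem coe_closedNeighborFinset_sdiff (hadj : G.Adj x y) :
    ↑(closedNeighborFinset G x \ closedNeighborFinset G y) = RxSet G x y := by
  ext p
  simp only [coe_sdiff, Set.mem_sdiff, mem_coe, mem_closedNeighborFinset, RxSet, triangleSet,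
    Set.mem_union, Set.mem_inter_iff, mem_neighborSet, Set.mem_singleton_iff]
  constructor
  · rintro ⟨rfl | hxp, hp⟩
    · exact absurd (Or.inr hadj.symm) hp
    · tauto
  · tauto

theorem coe_closedNeighborFinset_sdiff' (hadj : G.Adj x y) :
    ↑(closedNeighborFinset G y \ closedNeighborFinset G x) = RySet G x y := by
  rw [coe_closedNeighborFinset_sdiff hadj.symm, RxSet, RySet, triangleSet, triangleSet,
    Set.inter_comm]

theorem mu_eq_single_add {d : ℕ} (hd : (G.neighborSet x).ncard = d) (α : ℝ) (Q : Finset V) :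
    mu G α x = Pi.single x (α - (1 - α) / d) + massOn (closedNeighborFinset G x \ Q) ((1 - α) / d)
      + massOn (closedNeighborFinset G x ∩ Q) ((1 - α) / d) := by
  rw [add_assoc, ← massOn_eq_add]
  ext p
  rcases eq_or_ne p x with rfl | hpx
  · simp [mu, massOn]
  · by_cases h : G.Adj x p <;> simp [mu, massOn, hpx, h, hd]

theorem dist_add_dist_le (hconn : G.Connected) (hadj : G.Adj x y) {p q : V}
    (hp : p ∈ closedNeighborFinset G x \ closedNeighborFinset G y)
    (hq : q ∈ closedNeighborFinset G y \ closedNeighborFinset G x) :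
    G.dist p q + G.dist x y ≤ G.dist p y + G.dist x q := by
  simp only [mem_sdiff, mem_closedNeighborFinset, not_or] at hp hq
  have hxp : G.Adj x p := hp.1.resolve_left fun h => hp.2.2 (h ▸ hadj.symm)
  have hyq : G.Adj y q := hq.1.resolve_left fun h => hq.2.2 (h ▸ hadj)
  have hpy : 1 < G.dist p y :=
    (hconn.preconnected p y).one_lt_dist_of_ne_of_not_adj hp.2.1 fun h => hp.2.2 h.symm
  have hxq : 1 < G.dist x q :=
    (hconn.preconnected x q).one_lt_dist_of_ne_of_not_adj (Ne.symm hq.2.1) hq.2.2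
  have hpq : G.dist p q ≤ G.dist p x + G.dist x q := hconn.dist_triangle
  have hxq' : G.dist x q ≤ G.dist x y + G.dist y q := hconn.dist_triangle
  rw [dist_eq_one_iff_adj.2 hxp.symm] at hpq
  rw [dist_eq_one_iff_adj.2 hadj, dist_eq_one_iff_adj.2 hyq] at hxq'
  rw [dist_eq_one_iff_adj.2 hadj]
  omega

theorem IsPlanOn.exists_keep_common (hconn : G.Connected) {d : ℕ}
    (hdx : (G.neighborSet x).ncard = d) (hdy : (G.neighborSet y).ncard = d) {α : ℝ}
    (hβ : 0 ≤ (1 - α) / d) (hβα : (1 - α) / d ≤ α)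
    (hπ : IsPlanOn (closedNeighborFinset G x ∪ closedNeighborFinset G y)
      (mu G α x) (mu G α y) π) :
    ∃ π', IsPlanOn (closedNeighborFinset G x ∪ closedNeighborFinset G y)
        (Pi.single x (α - (1 - α) / d)
          + massOn (closedNeighborFinset G x \ closedNeighborFinset G y) ((1 - α) / d))
        (Pi.single y (α - (1 - α) / d)
          + massOn (closedNeighborFinset G y \ closedNeighborFinset G x) ((1 - α) / d)) π' ∧
      costOn (fun p q => (G.dist p q : ℝ)) (closedNeighborFinset G x ∪ closedNeighborFinset G y) π'
        ≤ costOn (fun p q => (G.dist p q : ℝ))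
          (closedNeighborFinset G x ∪ closedNeighborFinset G y) π := by
  have hμ := mu_eq_single_add hdx α (closedNeighborFinset G y)
  have hν := mu_eq_single_add hdy α (closedNeighborFinset G x)
  rw [inter_comm] at hν
  set β := (1 - α) / d
  have hsingle : ∀ w p : V, 0 ≤ (Pi.single w (α - β) : V → ℝ) p := fun w p => by
    rw [Pi.single_apply]; split_ifs <;> linarith
  have hmass : ∀ (S : Finset V) (p : V), 0 ≤ massOn S β p := fun S p => by
    simp only [massOn]; split_ifs <;> linarith
  set P := closedNeighborFinset G x
  set Q := closedNeighborFinset G y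
  rw [hμ, hν] at hπ
  obtain ⟨π', hπ', hcost⟩ := hπ.exists_sub_massOn (c := fun p q => (G.dist p q : ℝ))
    (fun p z q => by exact_mod_cast hconn.dist_triangle) (fun z => by simp) (m := β)
    (Z := P ∩ Q) (inter_subset_left.trans subset_union_left) fun z hz => by
      have hz' : massOn (P ∩ Q) β z = β := if_pos hz
      simp only [Pi.add_apply, hz']
      constructor <;> linarith [hsingle x z, hsingle y z, hmass (P \ Q) z, hmass (Q \ P) z]
  rw [add_sub_cancel_right, add_sub_cancel_right] at hπ'
  exact ⟨π', hπ', hcost⟩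

theorem IsPlanOn.exists_ship_edge (hconn : G.Connected) (hadj : G.Adj x y) {a m : ℝ}
    (hm : 0 ≤ m)
    (hπ : IsPlanOn (closedNeighborFinset G x ∪ closedNeighborFinset G y)
      (Pi.single x a + massOn (closedNeighborFinset G x \ closedNeighborFinset G y) m)
      (Pi.single y a + massOn (closedNeighborFinset G y \ closedNeighborFinset G x) m) π) :
    ∃ π', IsPlanOn (closedNeighborFinset G x ∪ closedNeighborFinset G y)
        (massOn (closedNeighborFinset G x \ closedNeighborFinset G y) m)
        (massOn (closedNeighborFinset G y \ closedNeighborFinset G x) m) π' ∧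
      costOn (fun p q => (G.dist p q : ℝ)) (closedNeighborFinset G x ∪ closedNeighborFinset G y) π'
        + a ≤ costOn (fun p q => (G.dist p q : ℝ))
          (closedNeighborFinset G x ∪ closedNeighborFinset G y) π := by
  set P := closedNeighborFinset G x
  set Q := closedNeighborFinset G y
  have hxU : x ∈ P ∪ Q := mem_union_left _ (by simp [P])
  have hyU : y ∈ P ∪ Q := mem_union_right _ (by simp [Q])
  have hmass : ∀ (S : Finset V) (p : V), 0 ≤ massOn S m p := fun S p => by
    simp only [massOn]; split_ifs <;> linarith
  have hsupp_left : ∀ p ∈ P ∪ Q, π p y ≠ 0 → p = x ∨ p ∈ P \ Q := fun p hp hpy => by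
    by_contra! h
    refine hpy (hπ.eq_zero_of_left hp hyU ?_)
    simp only [Pi.add_apply, Pi.single_eq_of_ne h.1, massOn, if_neg h.2, add_zero]
  have hsupp_right : ∀ q ∈ P ∪ Q, π x q ≠ 0 → q = y ∨ q ∈ Q \ P := fun q hq hxq => by
    by_contra! h
    refine hxq (hπ.eq_zero_of_right hxU hq ?_)
    simp only [Pi.add_apply, Pi.single_eq_of_ne h.1, massOn, if_neg h.2, add_zero]
  obtain ⟨π', hπ', hcost⟩ := hπ.exists_sub_single (c := fun p q => (G.dist p q : ℝ)) hxU hyU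
    (a := a) (by simp only [Pi.add_apply, Pi.single_eq_same]; linarith [hmass (P \ Q) x])
    (by simp only [Pi.add_apply, Pi.single_eq_same]; linarith [hmass (Q \ P) y])
    fun p hp q hq hpy hxq => by
      rcases hsupp_left p hp hpy with rfl | hp'
      · rw [add_comm]
      rcases hsupp_right q hq hxq with rfl | hq'
      · rw [add_comm]
      exact_mod_cast dist_add_dist_le hconn hadj hp' hq'
  rw [add_sub_cancel_left, add_sub_cancel_left] at hπ'
  rw [dist_eq_one_iff_adj.2 hadj, Nat.cast_one, one_mul] at hcost
  exact ⟨π', hπ', hcost⟩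

theorem le_costOn_of_isPlanOn (hconn : G.Connected) (hadj : G.Adj x y) {d : ℕ}
    (hdx : (G.neighborSet x).ncard = d) (hdy : (G.neighborSet y).ncard = d) {α : ℝ}
    (hβ : 0 ≤ (1 - α) / d) (hβα : (1 - α) / d ≤ α)
    (hπ : IsPlanOn (closedNeighborFinset G x ∪ closedNeighborFinset G y)
      (mu G α x) (mu G α y) π) :
    α - (1 - α) / d + (1 - α) / d * assignCost G (RxSet G x y) (RySet G x y)
      ≤ costOn (fun p q => (G.dist p q : ℝ))
        (closedNeighborFinset G x ∪ closedNeighborFinset G y) π := by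
  obtain ⟨π₁, hπ₁, hcost₁⟩ := hπ.exists_keep_common hconn hdx hdy hβ hβα
  obtain ⟨π₂, hπ₂, hcost₂⟩ := hπ₁.exists_ship_edge hconn hadj hβ
  have hmatch := hπ₂.mul_le_costOn (c := fun p q => (G.dist p q : ℝ))
    (L := assignCost G (RxSet G x y) (RySet G x y))
    (sdiff_subset.trans subset_union_left) (sdiff_subset.trans subset_union_right) hβ
    fun φ hφ => by
      rw [coe_closedNeighborFinset_sdiff hadj, coe_closedNeighborFinset_sdiff' hadj] at hφ
      rw [← assignCostOf_coe_finset, coe_closedNeighborFinset_sdiff hadj]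
      exact assignCost_le_assignCostOf G hφ
  linarith

theorem exists_isPlanOn_costOn_eq (hadj : G.Adj x y) {d : ℕ}
    (hdx : (G.neighborSet x).ncard = d) (hdy : (G.neighborSet y).ncard = d) {α : ℝ}
    (hβ : 0 ≤ (1 - α) / d) (hβα : (1 - α) / d ≤ α) :
    ∃ π, IsPlanOn (closedNeighborFinset G x ∪ closedNeighborFinset G y) (mu G α x) (mu G α y) π ∧
      costOn (fun p q => (G.dist p q : ℝ)) (closedNeighborFinset G x ∪ closedNeighborFinset G y) π
        = α - (1 - α) / d + (1 - α) / d * assignCost G (RxSet G x y) (RySet G x y) := by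
  have hμ := mu_eq_single_add hdx α (closedNeighborFinset G y)
  have hν := mu_eq_single_add hdy α (closedNeighborFinset G x)
  rw [inter_comm] at hν
  set β := (1 - α) / d
  set P := closedNeighborFinset G x
  set Q := closedNeighborFinset G y
  have hxU : x ∈ P ∪ Q := mem_union_left _ (by simp [P])
  have hyU : y ∈ P ∪ Q := mem_union_right _ (by simp [Q])
  have hPQ : P \ Q ⊆ P ∪ Q := sdiff_subset.trans subset_union_left
  have hQP : Q \ P ⊆ P ∪ Q := sdiff_subset.trans subset_union_right
  have hPiQ : P ∩ Q ⊆ P ∪ Q := inter_subset_left.trans subset_union_left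
  obtain ⟨φ, hφ, hφcost⟩ := exists_isOptAssign G (card_sdiff_comm
    (by rw [card_closedNeighborFinset hdx, card_closedNeighborFinset hdy]) : (P \ Q).card = _)
  have hmatch := (isPlanOn_graph hPQ hQP hφ hβ).add
    (isPlanOn_graph hPiQ hPiQ (Set.bijOn_id _) hβ)
  have hplan := hmatch.add_single hxU hyU (a := α - β)
    (add_nonneg (hmatch.nonneg x y) (by linarith))
  refine ⟨_, hplan.congr (fun p _ => ?_) (fun q _ => ?_), ?_⟩
  · rw [hμ]; simp only [Pi.add_apply]; ring
  · rw [hν]; simp only [Pi.add_apply]; ring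
  · rw [costOn_add_single hxU hyU, costOn_add, costOn_graph hPQ hQP hφ.mapsTo,
      costOn_graph hPiQ hPiQ (Set.mapsTo_id _), dist_eq_one_iff_adj.2 hadj,
      ← assignCostOf_coe_finset, hφcost, coe_closedNeighborFinset_sdiff hadj,
      coe_closedNeighborFinset_sdiff' hadj]
    simp only [id, dist_self, Nat.cast_zero, sum_const_zero, mul_zero, add_zero, Nat.cast_one,
      one_mul]
    ring

theorem W1_mu_eq (hconn : G.Connected) (hadj : G.Adj x y) {d : ℕ}
    (hdx : (G.neighborSet x).ncard = d) (hdy : (G.neighborSet y).ncard = d) {α : ℝ}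
    (hβ : 0 ≤ (1 - α) / d) (hβα : (1 - α) / d ≤ α) :
    W1 G (mu G α x) (mu G α y)
      = α - (1 - α) / d + (1 - α) / d * assignCost G (RxSet G x y) (RySet G x y) := by
  refine W1_eq_of_isPlanOn G (fun p hp => ?_) (fun q hq => ?_)
    (exists_isPlanOn_costOn_eq hadj hdx hdy hβ hβα)
    fun π hπ => le_costOn_of_isPlanOn hconn hadj hdx hdy hβ hβα hπ
  · simp only [mem_union, mem_closedNeighborFinset, not_or] at hp
    simp [mu, hp.1.1, hp.1.2]
  · simp only [mem_union, mem_closedNeighborFinset, not_or] at hq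
    simp [mu, hq.2.1, hq.2.2]

end Graph

end OllivierRicci

/-- exact formula for κ_α on the last linear part. -/
theorem OllivierRicci.kappaAlpha_formula_last_linear {V : Type*} (G : SimpleGraph V)
    (hlf : G.LocallyFinite) (hconn : G.Connected) (x y : V) (hadj : G.Adj x y)
    (d : ℕ) (hdx : (G.neighborSet x).ncard = d) (hdy : (G.neighborSet y).ncard = d)
    (α : ℝ) (hα : α ∈ Set.Icc (1 / ((d : ℝ) + 1)) 1) :
    OllivierRicci.kappaAlpha G α x y =
      (1 - α) / (d : ℝ) *
        ((d : ℝ) + 1 -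
          OllivierRicci.assignCost G (OllivierRicci.RxSet G x y) (OllivierRicci.RySet G x y)) := by
  have := hlf
  have hd : (0 : ℝ) < d := by
    rw [← hdx, Nat.cast_pos, Set.ncard_pos (G.neighborSet x).toFinite]
    exact ⟨y, hadj⟩
  have hβ : 0 ≤ (1 - α) / d := div_nonneg (by linarith [hα.2]) hd.le
  have hβα : (1 - α) / d ≤ α := by
    rw [div_le_iff₀ hd]
    have := (div_le_iff₀ (by positivity)).1 hα.1
    linarith
  rw [kappaAlpha, W1_mu_eq hconn hadj hdx hdy hβ hβα, SimpleGraph.dist_eq_one_iff_adj.2 hadj]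
  field_simp
  ring
end
end

section
/- Let G be a locally finite graph and x ~ y adjacent vertices of equal degree d. If |△(x,y)| > (2d − 4)/3, then κ(x,y) > 0. -/
open scoped Classical BigOperators

noncomputable section

/-!
For adjacent `x, y` put `W(α) = W₁(μ_x^α, μ_y^α)`, so that `κ_α(x,y) = 1 - W(α)`. Mixing a plan
at laziness `a` with the plan `δ_x ↦ δ_y` shows that `W` is convex along segments ending at
`(1, 1)`, hence `κ_α(x,y)/(1-α)` is nondecreasing in `α`; and `W(α) ≥ 2α - 1`, since the mass of
`μ_x^α` at `x` that `μ_y^α` cannot absorb must move. So `κ(x,y)` is the supremum of these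
quotients and is at least the one at `α = 1/2`. There, the plan that keeps `{x, y} ∪ △(x,y)` in
place, moves the surplus of `x` to `y`, and matches `R_x` with `R_y` at distance `≤ 3` gives
`κ_α(x,y)/(1-α) ≥ 1 + (1 - 3|R_x|)/d` with `|R_x| = d - 1 - |△(x,y)|`, which is positive
exactly when `3|△(x,y)| > 2d - 4`.
-/

open Set Filter Topology

namespace OllivierRicci

variable {V : Type*}

theorem tsum_add_le_of_nonneg {ι : Type*} {f g : ι → ℝ} (hf : ∀ i, 0 ≤ f i) (hg : ∀ i, 0 ≤ g i) :
    ∑' i, (f i + g i) ≤ ∑' i, f i + ∑' i, g i := by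
  by_cases h : Summable f ∧ Summable g
  · exact (h.1.tsum_add h.2).le
  · have hfg : ¬Summable fun i => f i + g i := fun hs =>
      h ⟨hs.of_nonneg_of_le hf fun i => le_add_of_nonneg_right (hg i),
        hs.of_nonneg_of_le hg fun i => le_add_of_nonneg_left (hf i)⟩
    rw [tsum_eq_zero_of_not_summable hfg]
    exact add_nonneg (tsum_nonneg hf) (tsum_nonneg hg)

theorem hasSum_indicator_one {A : Set V} (hA : A.Finite) :
    HasSum (A.indicator (1 : V → ℝ)) A.ncard := by
  have h := hasSum_sum_of_ne_finset_zero (L := SummationFilter.unconditional V)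
    (s := hA.toFinset) (f := A.indicator (1 : V → ℝ))
    fun b hb => indicator_of_notMem (by simpa using hb) _
  rw [Finset.sum_congr rfl fun b hb => indicator_of_mem (hA.mem_toFinset.1 hb) _] at h
  simpa [ncard_eq_toFinset_card A hA] using h

theorem le_limUnder_of_monotoneOn {α β : Type*} [LinearOrder α] [TopologicalSpace α]
    [OrderTopology α] [ConditionallyCompleteLinearOrder β] [TopologicalSpace β] [OrderTopology β]
    {f : α → β} {a b t : α} [(𝓝[<] b).NeBot] (hf : MonotoneOn f (Ioo a b))
    (hbdd : BddAbove (f '' Ioo a b)) (ht : t ∈ Ioo a b) : f t ≤ limUnder (𝓝[<] b) f := by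
  rw [(hf.tendsto_nhdsWithin_Ioo_left ⟨t, ht⟩ hbdd).limUnder_eq]
  exact le_csSup hbdd (mem_image_of_mem f ht)

theorem monotoneOn_one_sub_div_one_sub {W : ℝ → ℝ}
    (hW : ∀ a ∈ Ioo (0 : ℝ) 1, ∀ t ∈ Ioc (0 : ℝ) 1, W (t * a + (1 - t)) ≤ t * W a + (1 - t)) :
    MonotoneOn (fun α => (1 - W α) / (1 - α)) (Ioo 0 1) := by
  intro a ha b hb hab
  have ha1 : 0 < 1 - a := by linarith [ha.2]
  have hb1 : 0 < 1 - b := by linarith [hb.2]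
  set t := (1 - b) / (1 - a)
  have hta : t * (1 - a) = 1 - b := div_mul_cancel₀ _ ha1.ne'
  have hconv := hW a ha t ⟨div_pos hb1 ha1, (div_le_one ha1).2 (by linarith)⟩
  rw [show t * a + (1 - t) = b by linarith] at hconv
  have hstep : t * (1 - W a) ≤ 1 - W b := by linarith
  rw [div_le_div_iff₀ ha1 hb1]
  calc (1 - W a) * (1 - b) = t * (1 - W a) * (1 - a) := by rw [← hta]; ring
    _ ≤ (1 - W b) * (1 - a) := mul_le_mul_of_nonneg_right hstep ha1.le

section Transport

variable {μ ν μ₁ μ₂ ν₁ ν₂ : V → ℝ} {π π₁ π₂ : V → V → ℝ}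

theorem IsProb.isPlan_mul (hμ : IsProb μ) (hν : IsProb ν) :
    IsPlan μ ν fun a b => μ a * ν b :=
  ⟨fun a b => mul_nonneg (hμ.1 a) (hν.1 b), fun a => by simpa using hν.2.mul_left (μ a),
    fun b => by simpa using hμ.2.mul_right (ν b)⟩

theorem IsPlan.add (h₁ : IsPlan μ₁ ν₁ π₁) (h₂ : IsPlan μ₂ ν₂ π₂) :
    IsPlan (μ₁ + μ₂) (ν₁ + ν₂) (π₁ + π₂) :=
  ⟨fun a b => add_nonneg (h₁.1 a b) (h₂.1 a b), fun a => (h₁.2.1 a).add (h₂.2.1 a),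
    fun b => (h₁.2.2 b).add (h₂.2.2 b)⟩

theorem IsPlan.smul (h : IsPlan μ ν π) {c : ℝ} (hc : 0 ≤ c) : IsPlan (c • μ) (c • ν) (c • π) :=
  ⟨fun a b => mul_nonneg hc (h.1 a b), fun a => (h.2.1 a).mul_left c,
    fun b => (h.2.2 b).mul_left c⟩

theorem IsPlan.eq_zero_of_left (h : IsPlan μ ν π) {a : V} (ha : μ a = 0) (b : V) :
    π a b = 0 := by
  have hrow := h.2.1 a
  rw [ha, hasSum_zero_iff_of_nonneg (h.1 a)] at hrow
  exact congrFun hrow b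

theorem IsPlan.eq_zero_of_right (h : IsPlan μ ν π) {b : V} (hb : ν b = 0) (a : V) :
    π a b = 0 := by
  have hcol := h.2.2 b
  rw [hb, hasSum_zero_iff_of_nonneg fun a => h.1 a b] at hcol
  exact congrFun hcol a

def assignPlan (A : Set V) (f : V → V) : V → V → ℝ := fun a b => if a ∈ A ∧ b = f a then 1 else 0

theorem isPlan_assignPlan {A B : Set V} {f : V → V} (h : BijOn f A B) :
    IsPlan (A.indicator 1) (B.indicator 1) (assignPlan A f) := by
  refine ⟨fun a b => by unfold assignPlan; split_ifs <;> norm_num, fun a => ?_, fun b => ?_⟩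
  · by_cases ha : a ∈ A
    · simpa [assignPlan, ha] using hasSum_ite_eq (f a) (1 : ℝ)
    · simp [assignPlan, ha]
  · by_cases hb : b ∈ B
    · obtain ⟨a₀, ha₀, rfl⟩ := h.surjOn hb
      have hrow : (fun a => assignPlan A f a (f a₀)) = fun a => if a = a₀ then 1 else 0 := by
        funext a
        by_cases ha : a ∈ A
        · simp [assignPlan, ha, h.injOn.eq_iff ha₀ ha, eq_comm]
        · simp [assignPlan, ha, show a ≠ a₀ from fun e => ha (e ▸ ha₀)]
      simpa [hrow, hb] using hasSum_ite_eq a₀ (1 : ℝ)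
    · have hrow : (fun a => assignPlan A f a b) = 0 := by
        funext a
        simp only [assignPlan, Pi.zero_apply, ite_eq_right_iff, one_ne_zero, imp_false]
        rintro ⟨ha, rfl⟩
        exact hb (h.mapsTo ha)
      rw [hrow, indicator_of_notMem hb]
      exact hasSum_zero

variable (G : SimpleGraph V)

theorem cost_add_le (h₁ : ∀ a b, 0 ≤ π₁ a b) (h₂ : ∀ a b, 0 ≤ π₂ a b) :
    cost G (π₁ + π₂) ≤ cost G π₁ + cost G π₂ := by
  simp only [cost, Pi.add_apply, mul_add]
  exact tsum_add_le_of_nonneg (fun p => mul_nonneg (G.dist _ _).cast_nonneg (h₁ _ _))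
    (fun p => mul_nonneg (G.dist _ _).cast_nonneg (h₂ _ _))

theorem cost_smul (c : ℝ) (π : V → V → ℝ) : cost G (c • π) = c * cost G π := by
  simp only [cost, Pi.smul_apply, smul_eq_mul, mul_left_comm _ c, tsum_mul_left]

theorem cost_assignPlan {A : Set V} (hA : A.Finite) (f : V → V) :
    cost G (assignPlan A f) = assignCostOf G A f := by
  rw [assignCostOf, finsum_mem_eq_finite_toFinset_sum _ hA, cost,
    tsum_eq_sum (s := hA.toFinset.image fun a => (a, f a))]
  · rw [Finset.sum_image fun a _ b _ h => congrArg Prod.fst h]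
    refine Finset.sum_congr rfl fun a ha => ?_
    simp [assignPlan, hA.mem_toFinset.1 ha]
  · rintro ⟨a, b⟩ hp
    simp only [assignPlan, mul_ite, mul_one, mul_zero, ite_eq_right_iff]
    rintro ⟨ha, rfl⟩
    exact absurd (Finset.mem_image_of_mem _ (hA.mem_toFinset.2 ha)) hp

theorem W1_le_cost (h : IsPlan μ ν π) : W1 G μ ν ≤ cost G π := by
  refine csInf_le ⟨0, ?_⟩ ⟨π, h, rfl⟩
  rintro _ ⟨π', hπ', rfl⟩
  exact tsum_nonneg fun p => mul_nonneg (G.dist _ _).cast_nonneg (hπ'.1 _ _)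

theorem le_W1 {r : ℝ} (hne : ∃ π, IsPlan μ ν π) (h : ∀ π, IsPlan μ ν π → r ≤ cost G π) :
    r ≤ W1 G μ ν := by
  obtain ⟨π, hπ⟩ := hne
  exact le_csInf ⟨_, π, hπ, rfl⟩ (by rintro _ ⟨π, hπ, rfl⟩; exact h π hπ)

theorem IsPlan.summable_cost (h : IsPlan μ ν π) (hμ : μ.support.Finite)
    (hν : ν.support.Finite) : Summable fun p : V × V => (G.dist p.1 p.2 : ℝ) * π p.1 p.2 := by
  refine summable_of_hasFiniteSupport ((hμ.prod hν).subset fun p hp => ?_)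
  have hπ : π p.1 p.2 ≠ 0 := right_ne_zero_of_mul hp
  exact ⟨fun hμ0 => hπ (h.eq_zero_of_left hμ0 _), fun hν0 => hπ (h.eq_zero_of_right hν0 _)⟩

theorem IsPlan.sub_le_cost (hconn : G.Connected) (h : IsPlan μ ν π)
    (hs : Summable fun p : V × V => (G.dist p.1 p.2 : ℝ) * π p.1 p.2) (a : V) :
    μ a - ν a ≤ cost G π := by
  have hstay : π a a ≤ ν a := le_hasSum (h.2.2 a) a fun b _ => h.1 b a
  have hmove : HasSum (fun b => π a b - if b = a then π a a else 0) (μ a - π a a) :=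
    (h.2.1 a).sub (hasSum_ite_eq a _)
  have hrow : μ a - π a a ≤ ∑' b, (G.dist a b : ℝ) * π a b := by
    have hrowcost : HasSum (fun b => (G.dist a b : ℝ) * π a b) (∑' b, (G.dist a b : ℝ) * π a b) :=
      (hs.comp_injective (Prod.mk_right_injective a)).hasSum
    refine hasSum_le (fun b => ?_) hmove hrowcost
    by_cases hb : b = a
    · subst hb; simp
    · have : (1 : ℝ) ≤ G.dist a b := by exact_mod_cast hconn.pos_dist_of_ne (Ne.symm hb)
      simp only [hb, if_false, sub_zero]
      nlinarith [h.1 a b]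
  have hcost : ∑' b, (G.dist a b : ℝ) * π a b ≤ cost G π := by
    unfold cost
    have := tsum_comp_le_tsum_of_inj hs (fun p => mul_nonneg (G.dist _ _).cast_nonneg (h.1 _ _))
      (Prod.mk_right_injective a)
    simpa only [Function.comp_def] using this
  linarith

theorem assignCostOf_id (A : Set V) : assignCostOf G A id = 0 := by
  simp [assignCostOf]

theorem assignCostOf_singleton (x : V) (f : V → V) :
    assignCostOf G {x} f = G.dist x (f x) :=
  finsum_mem_singleton

theorem assignCostOf_le {A : Set V} (hA : A.Finite) {f : V → V} {k : ℕ}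
    (h : ∀ a ∈ A, G.dist a (f a) ≤ k) : assignCostOf G A f ≤ k * A.ncard := by
  rw [assignCostOf, finsum_mem_eq_finite_toFinset_sum _ hA, ncard_eq_toFinset_card A hA,
    mul_comm, ← nsmul_eq_mul]
  exact Finset.sum_le_card_nsmul _ _ _ fun a ha => by exact_mod_cast h a (hA.mem_toFinset.1 ha)

end Transport

variable (G : SimpleGraph V) {x y : V}

theorem mu_eq_indicator (α : ℝ) (x : V) :
    mu G α x = (α - (1 - α) / (G.neighborSet x).ncard) • ({x} : Set V).indicator 1 +
      ((1 - α) / (G.neighborSet x).ncard) • (insert x (G.neighborSet x)).indicator 1 := by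
  funext z
  by_cases hz : z = x
  · subst hz; simp [mu]
  · by_cases h : G.Adj x z <;> simp [mu, hz, h]

theorem mu_one (x : V) : mu G 1 x = ({x} : Set V).indicator 1 := by
  simp [mu_eq_indicator]

theorem mu_affine (a t : ℝ) (x : V) :
    mu G (t * a + (1 - t)) x = t • mu G a x + (1 - t) • mu G 1 x := by
  rw [mu_one]
  funext z
  by_cases hz : z = x
  · subst hz; simp [mu]
  · by_cases h : G.Adj x z
    · simp [mu, hz, h]; ring
    · simp [mu, hz, h]

theorem support_mu_subset (α : ℝ) (x : V) :
    (mu G α x).support ⊆ insert x (G.neighborSet x) := by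
  intro z hz
  by_contra hz'
  simp only [mem_insert_iff, SimpleGraph.mem_neighborSet, not_or] at hz'
  exact hz (by simp [mu, hz'.1, hz'.2])

theorem isProb_mu (hx : (G.neighborSet x).Finite) (hne : (G.neighborSet x).Nonempty) {α : ℝ}
    (h0 : 0 ≤ α) (h1 : α ≤ 1) : IsProb (mu G α x) := by
  refine ⟨fun z => ?_, ?_⟩
  · unfold mu
    split_ifs
    exacts [h0, div_nonneg (by linarith) (Nat.cast_nonneg _), le_rfl]
  · have hd : ((G.neighborSet x).ncard : ℝ) ≠ 0 := by exact_mod_cast ((ncard_pos hx).2 hne).ne'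
    set c := (1 - α) / ((G.neighborSet x).ncard : ℝ)
    rw [mu_eq_indicator]
    convert ((hasSum_indicator_one (finite_singleton x)).const_smul (α - c)).add
      ((hasSum_indicator_one (hx.insert x)).const_smul c) using 1
    · rfl
    rw [ncard_singleton, ncard_insert_of_notMem (G.notMem_neighborSet_self (a := x)) hx]
    simp only [c, smul_eq_mul]
    push_cast
    field_simp
    ring

theorem triangleSet_comm (x y : V) : triangleSet G x y = triangleSet G y x :=
  inter_comm _ _

theorem RySet_eq_RxSet_swap (x y : V) : RySet G x y = RxSet G y x := by
  rw [RySet, RxSet, triangleSet_comm]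

theorem insert_neighborSet_eq_union (hadj : G.Adj x y) :
    insert x (G.neighborSet x) = insert x (insert y (triangleSet G x y)) ∪ RxSet G x y := by
  ext z
  by_cases hzy : z = y
  · subst hzy; simp [hadj]
  · simp only [RxSet, triangleSet, mem_union, mem_insert_iff, Set.mem_sdiff, mem_inter_iff,
      mem_singleton_iff, SimpleGraph.mem_neighborSet, hzy]
    tauto

theorem disjoint_RxSet (x y : V) :
    Disjoint (insert x (insert y (triangleSet G x y))) (RxSet G x y) := by
  rw [disjoint_left]
  rintro z hz ⟨hxz, hz'⟩
  rcases hz with rfl | rfl | hT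
  exacts [G.irrefl hxz, hz' (Or.inr rfl), hz' (Or.inl hT)]

theorem ncard_RxSet (hadj : G.Adj x y) (hx : (G.neighborSet x).Finite) :
    (RxSet G x y).ncard + (triangleSet G x y).ncard + 1 = (G.neighborSet x).ncard := by
  have hT : (triangleSet G x y).Finite := hx.subset inter_subset_left
  have hxT : x ∉ insert y (triangleSet G x y) := by
    rintro (rfl | hT)
    exacts [G.irrefl hadj, G.irrefl hT.1]
  have hyT : y ∉ triangleSet G x y := fun h => G.irrefl h.2
  have h := congrArg ncard (insert_neighborSet_eq_union G hadj)
  rw [ncard_insert_of_notMem (G.notMem_neighborSet_self (a := x)) hx,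
    ncard_union_eq (disjoint_RxSet G x y) ((hT.insert y).insert x) (hx.subset sdiff_subset),
    ncard_insert_of_notMem hxT (hT.insert y), ncard_insert_of_notMem hyT hT] at h
  omega

theorem mu_eq_of_adj (hadj : G.Adj x y) (α : ℝ) :
    mu G α x = (α - (1 - α) / (G.neighborSet x).ncard) • ({x} : Set V).indicator 1 +
      ((1 - α) / (G.neighborSet x).ncard) • (insert x (insert y (triangleSet G x y))).indicator 1 +
      ((1 - α) / (G.neighborSet x).ncard) • (RxSet G x y).indicator 1 := by
  rw [mu_eq_indicator, insert_neighborSet_eq_union G hadj,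
    indicator_union_of_disjoint (disjoint_RxSet G x y)]
  funext z
  simp only [Pi.add_apply, Pi.smul_apply, smul_eq_mul]
  ring

theorem exists_bijOn_RxSet_RySet (hadj : G.Adj x y) (hx : (G.neighborSet x).Finite)
    (hy : (G.neighborSet y).Finite) (hdeg : (G.neighborSet x).ncard = (G.neighborSet y).ncard) :
    ∃ φ, BijOn φ (RxSet G x y) (RySet G x y) := by
  have : Nonempty V := ⟨x⟩
  have hRx : (RxSet G x y).Finite := hx.subset sdiff_subset
  have hRy : (RySet G x y).Finite := hy.subset sdiff_subset
  have hRxcard := ncard_RxSet G hadj hx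
  have hRycard := ncard_RxSet G hadj.symm hy
  rw [← RySet_eq_RxSet_swap, ← triangleSet_comm] at hRycard
  refine hRx.exists_bijOn_of_encard_eq ?_
  rw [← hRx.cast_ncard_eq, ← hRy.cast_ncard_eq]
  norm_cast
  omega

theorem dist_le_three {a b : V} (ha : G.Adj a x) (hxy : G.Adj x y) (hb : G.Adj y b) :
    G.dist a b ≤ 3 :=
  SimpleGraph.dist_le (.cons ha (.cons hxy (.cons hb .nil)))

theorem kappaAlpha_of_adj (hadj : G.Adj x y) (α : ℝ) :
    kappaAlpha G α x y = 1 - W1 G (mu G α x) (mu G α y) := by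
  rw [kappaAlpha, SimpleGraph.dist_eq_one_iff_adj.2 hadj, Nat.cast_one, div_one]

theorem W1_mu_affine_le {a t : ℝ} (hne : ∃ π, IsPlan (mu G a x) (mu G a y) π) (ht0 : 0 < t)
    (ht1 : t ≤ 1) :
    W1 G (mu G (t * a + (1 - t)) x) (mu G (t * a + (1 - t)) y) ≤
      t * W1 G (mu G a x) (mu G a y) + (1 - t) * G.dist x y := by
  have hδ : IsPlan (mu G 1 x) (mu G 1 y) (assignPlan {x} fun _ => y) := by
    rw [mu_one, mu_one]
    exact isPlan_assignPlan (bijOn_singleton.2 rfl)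
  have key : (W1 G (mu G (t * a + (1 - t)) x) (mu G (t * a + (1 - t)) y) -
      (1 - t) * G.dist x y) / t ≤ W1 G (mu G a x) (mu G a y) := by
    refine le_W1 G hne fun π hπ => ?_
    have hplan := (hπ.smul ht0.le).add (hδ.smul (sub_nonneg.2 ht1))
    rw [← mu_affine, ← mu_affine] at hplan
    rw [div_le_iff₀' ht0, sub_le_iff_le_add']
    calc W1 G _ _ ≤ cost G _ := W1_le_cost G hplan
      _ ≤ cost G (t • π) + cost G ((1 - t) • assignPlan {x} fun _ => y) :=
        cost_add_le G (hπ.smul ht0.le).1 (hδ.smul (sub_nonneg.2 ht1)).1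
      _ = (1 - t) * G.dist x y + t * cost G π := by
        rw [cost_smul, cost_smul, cost_assignPlan G (finite_singleton x), assignCostOf_singleton]
        ring
  rw [div_le_iff₀' ht0] at key
  linarith

theorem two_mul_sub_one_le_W1_mu (hconn : G.Connected) (hadj : G.Adj x y)
    (hx : (G.neighborSet x).Finite) (hy : (G.neighborSet y).Finite) {α : ℝ} (h0 : 0 ≤ α)
    (h1 : α ≤ 1) : 2 * α - 1 ≤ W1 G (mu G α x) (mu G α y) := by
  have hxprob := isProb_mu G hx ⟨y, hadj⟩ h0 h1
  have hyprob := isProb_mu G hy ⟨x, hadj.symm⟩ h0 h1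
  refine le_W1 G ⟨_, hxprob.isPlan_mul hyprob⟩ fun π hπ => ?_
  have hmove := hπ.sub_le_cost G hconn (hπ.summable_cost G
    ((hx.insert x).subset (support_mu_subset G α x))
    ((hy.insert y).subset (support_mu_subset G α y))) x
  have hdeg : (1 : ℝ) ≤ (G.neighborSet y).ncard := by
    exact_mod_cast (ncard_pos hy).2 ⟨x, hadj.symm⟩
  have hyx : mu G α y x ≤ 1 - α := by
    simpa [mu, hadj.ne, hadj.symm] using div_le_self (by linarith : 0 ≤ 1 - α) hdeg
  have hxx : mu G α x x = α := by simp [mu]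
  linarith

theorem W1_mu_le (hadj : G.Adj x y) (hx : (G.neighborSet x).Finite)
    (hy : (G.neighborSet y).Finite) {d : ℕ} (hdx : (G.neighborSet x).ncard = d)
    (hdy : (G.neighborSet y).ncard = d) {α : ℝ} (hα : 1 / 2 ≤ α) (hα1 : α ≤ 1) :
    W1 G (mu G α x) (mu G α y) ≤
      α - (1 - α) / d + 3 * ((1 - α) / d) * (RxSet G x y).ncard := by
  have hd : (1 : ℝ) ≤ d := by rw [← hdx]; exact_mod_cast (ncard_pos hx).2 ⟨y, hadj⟩
  have hμx := mu_eq_of_adj G hadj α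
  have hμy := mu_eq_of_adj G hadj.symm α
  rw [hdx] at hμx
  rw [insert_comm, ← triangleSet_comm, ← RySet_eq_RxSet_swap, hdy] at hμy
  set c := (1 - α) / (d : ℝ)
  have hc : 0 ≤ c := div_nonneg (by linarith) (by positivity)
  have hαc : 0 ≤ α - c := by
    have : c ≤ 1 - α := div_le_self (by linarith) hd
    linarith
  have hRx : (RxSet G x y).Finite := hx.subset sdiff_subset
  obtain ⟨φ, hφ⟩ := exists_bijOn_RxSet_RySet G hadj hx hy (hdx.trans hdy.symm)
  set S := insert x (insert y (triangleSet G x y))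
  have hS : S.Finite := ((hx.subset inter_subset_left).insert y).insert x
  have hδ := (isPlan_assignPlan (bijOn_singleton.2 rfl : BijOn (fun _ => y) {x} {y})).smul hαc
  have hid := (isPlan_assignPlan (bijOn_id S)).smul hc
  have hRxRy := (isPlan_assignPlan hφ).smul hc
  have hplan := (hδ.add hid).add hRxRy
  rw [← hμx, ← hμy] at hplan
  have hφ3 : ∀ a ∈ RxSet G x y, G.dist a (φ a) ≤ 3 := fun a ha =>
    dist_le_three G (ha.1 : G.Adj x a).symm hadj (hφ.mapsTo ha).1
  calc W1 G _ _ ≤ cost G _ := W1_le_cost G hplan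
    _ ≤ cost G _ + cost G _ := cost_add_le G (hδ.add hid).1 hRxRy.1
    _ ≤ cost G _ + cost G _ + cost G _ := by gcongr; exact cost_add_le G hδ.1 hid.1
    _ ≤ α - c + 3 * c * (RxSet G x y).ncard := by
      rw [cost_smul, cost_smul, cost_smul, cost_assignPlan G (finite_singleton x),
        cost_assignPlan G hS, cost_assignPlan G hRx,
        assignCostOf_singleton, assignCostOf_id, SimpleGraph.dist_eq_one_iff_adj.2 hadj]
      have hcostφ := assignCostOf_le G hRx hφ3
      push_cast at hcostφ ⊢
      nlinarith [mul_le_mul_of_nonneg_left hcostφ hc]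

theorem monotoneOn_kappaAlpha_div (hadj : G.Adj x y) (hx : (G.neighborSet x).Finite)
    (hy : (G.neighborSet y).Finite) :
    MonotoneOn (fun α => kappaAlpha G α x y / (1 - α)) (Ioo 0 1) := by
  simp only [kappaAlpha_of_adj G hadj]
  refine monotoneOn_one_sub_div_one_sub fun a ha t ht => ?_
  have hne := (isProb_mu G hx ⟨y, hadj⟩ ha.1.le ha.2.le).isPlan_mul
    (isProb_mu G hy ⟨x, hadj.symm⟩ ha.1.le ha.2.le)
  simpa [SimpleGraph.dist_eq_one_iff_adj.2 hadj] using W1_mu_affine_le G ⟨_, hne⟩ ht.1 ht.2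

theorem kappaAlpha_div_le_two (hconn : G.Connected) (hadj : G.Adj x y)
    (hx : (G.neighborSet x).Finite) (hy : (G.neighborSet y).Finite) {α : ℝ}
    (hα : α ∈ Ioo 0 1) : kappaAlpha G α x y / (1 - α) ≤ 2 := by
  have hW := two_mul_sub_one_le_W1_mu G hconn hadj hx hy hα.1.le hα.2.le
  rw [kappaAlpha_of_adj G hadj, div_le_iff₀ (sub_pos.2 hα.2)]
  linarith

theorem kappaAlpha_div_le_kappa (hconn : G.Connected) (hadj : G.Adj x y)
    (hx : (G.neighborSet x).Finite) (hy : (G.neighborSet y).Finite) {α : ℝ}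
    (hα : α ∈ Ioo 0 1) : kappaAlpha G α x y / (1 - α) ≤ kappa G x y :=
  le_limUnder_of_monotoneOn (monotoneOn_kappaAlpha_div G hadj hx hy)
    ⟨2, by rintro _ ⟨β, hβ, rfl⟩; exact kappaAlpha_div_le_two G hconn hadj hx hy hβ⟩ hα

theorem le_kappaAlpha_div (hadj : G.Adj x y) (hx : (G.neighborSet x).Finite)
    (hy : (G.neighborSet y).Finite) {d : ℕ} (hdx : (G.neighborSet x).ncard = d)
    (hdy : (G.neighborSet y).ncard = d) {α : ℝ} (hα : 1 / 2 ≤ α) (hα1 : α < 1) :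
    1 + (1 - 3 * (RxSet G x y).ncard) / d ≤ kappaAlpha G α x y / (1 - α) := by
  have hW := W1_mu_le G hadj hx hy hdx hdy hα hα1.le
  rw [kappaAlpha_of_adj G hadj, le_div_iff₀ (sub_pos.2 hα1)]
  calc (1 + (1 - 3 * (RxSet G x y).ncard) / d) * (1 - α)
      = 1 - (α - (1 - α) / d + 3 * ((1 - α) / d) * (RxSet G x y).ncard) := by ring
    _ ≤ _ := by linarith

end OllivierRicci

/-- many triangles force positive Lin-Lu-Yau curvature. -/
theorem OllivierRicci.kappa_pos_of_many_triangles {V : Type*} (G : SimpleGraph V)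
    (hlf : G.LocallyFinite) (hconn : G.Connected) (x y : V) (hadj : G.Adj x y)
    (d : ℕ) (hdx : (G.neighborSet x).ncard = d) (hdy : (G.neighborSet y).ncard = d)
    (htri : ((OllivierRicci.triangleSet G x y).ncard : ℝ) > (2 * (d : ℝ) - 4) / 3) :
    0 < OllivierRicci.kappa G x y := by
  have hx : (G.neighborSet x).Finite := (hlf x).finite
  have hy : (G.neighborSet y).Finite := (hlf y).finite
  have hd : (0 : ℝ) < d := by rw [← hdx]; exact_mod_cast (ncard_pos hx).2 ⟨y, hadj⟩
  have hRx : ((RxSet G x y).ncard : ℝ) + (triangleSet G x y).ncard + 1 = d := by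
    rw [← hdx]; exact_mod_cast ncard_RxSet G hadj hx
  have hnum : 0 < (d : ℝ) + (1 - 3 * (RxSet G x y).ncard) := by
    rw [gt_iff_lt, div_lt_iff₀ three_pos] at htri
    linarith
  calc 0 < 1 + (1 - 3 * ((RxSet G x y).ncard : ℝ)) / d := by
        rw [one_add_div hd.ne']
        exact div_pos hnum hd
    _ ≤ kappaAlpha G (1 / 2) x y / (1 - 1 / 2) :=
      le_kappaAlpha_div G hadj hx hy hdx hdy le_rfl (by norm_num)
    _ ≤ kappa G x y := kappaAlpha_div_le_kappa G hconn hadj hx hy (by norm_num)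
end
end

section
/- Let G be a locally finite graph and x ~ y adjacent vertices of equal degree d. If κ(x,y) > |△(x,y)|/d, then κ(x,y) ≠ κ₀(x,y). -/
open scoped Classical BigOperators

noncomputable section

/-!
A transport plan must move every unit of mass of `μ₁` that lies outside the support of `μ₂` to a
different vertex, hence by distance at least one on a connected graph. For the non-lazy walks
`μ_x = mu G 0 x` and `μ_y` this is the mass `(d - |△(x,y)|)/d` of `μ_x` on `S₁(x) \ △(x,y)`, so
`W₁(μ_x, μ_y) ≥ 1 - |△(x,y)|/d`, i.e. `κ₀(x,y) ≤ |△(x,y)|/d < κ(x,y)`.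
-/

namespace OllivierRicci

variable {V : Type*} {G : SimpleGraph V}

section Transport

variable {μ₁ μ₂ : V → ℝ} {π : V → V → ℝ}

theorem isPlan_mul (h₁ : IsProb μ₁) (h₂ : IsProb μ₂) : IsPlan μ₁ μ₂ fun u v => μ₁ u * μ₂ v :=
  ⟨fun u v => mul_nonneg (h₁.1 u) (h₂.1 v),
    fun u => by simpa using h₂.2.mul_left (μ₁ u),
    fun v => by simpa using h₁.2.mul_right (μ₂ v)⟩

theorem IsPlan.le_left (hπ : IsPlan μ₁ μ₂ π) (u v : V) : π u v ≤ μ₁ u :=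
  le_hasSum (hπ.2.1 u) v fun v' _ => hπ.1 u v'

theorem IsPlan.le_right (hπ : IsPlan μ₁ μ₂ π) (u v : V) : π u v ≤ μ₂ v :=
  le_hasSum (hπ.2.2 v) u fun u' _ => hπ.1 u' v

theorem IsPlan.eq_zero_of_left_s14 (hπ : IsPlan μ₁ μ₂ π) {u : V} (hu : μ₁ u = 0) (v : V) :
    π u v = 0 :=
  le_antisymm (hu ▸ hπ.le_left u v) (hπ.1 u v)

theorem IsPlan.eq_zero_of_right_s14 (hπ : IsPlan μ₁ μ₂ π) (u : V) {v : V} (hv : μ₂ v = 0) :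
    π u v = 0 :=
  le_antisymm (hv ▸ hπ.le_right u v) (hπ.1 u v)

theorem IsPlan.sum_right_eq (hπ : IsPlan μ₁ μ₂ π) {t : Finset V} (ht : ∀ v ∉ t, μ₂ v = 0)
    (u : V) : ∑ v ∈ t, π u v = μ₁ u :=
  (hasSum_sum_of_ne_finset_zero fun v hv => hπ.eq_zero_of_right_s14 u (ht v hv)).unique (hπ.2.1 u)

theorem IsPlan.cost_eq_sum (hπ : IsPlan μ₁ μ₂ π) {s t : Finset V} (hs : ∀ u ∉ s, μ₁ u = 0)
    (ht : ∀ v ∉ t, μ₂ v = 0) :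
    cost G π = ∑ u ∈ s, ∑ v ∈ t, (G.dist u v : ℝ) * π u v := by
  rw [← Finset.sum_product' s t fun u v => (G.dist u v : ℝ) * π u v]
  refine tsum_eq_sum fun p hp => ?_
  rcases not_and_or.1 (Finset.mem_product.not.1 hp) with hu | hv
  · rw [hπ.eq_zero_of_left_s14 (hs _ hu), mul_zero]
  · rw [hπ.eq_zero_of_right_s14 _ (ht _ hv), mul_zero]

theorem IsPlan.sum_sdiff_le_cost (hconn : G.Connected) (hπ : IsPlan μ₁ μ₂ π) {s t : Finset V}
    (hs : ∀ u ∉ s, μ₁ u = 0) (ht : ∀ v ∉ t, μ₂ v = 0) :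
    ∑ u ∈ s \ t, μ₁ u ≤ cost G π := by
  have hterm_nonneg : ∀ u v, 0 ≤ (G.dist u v : ℝ) * π u v :=
    fun u v => mul_nonneg (Nat.cast_nonneg _) (hπ.1 u v)
  calc ∑ u ∈ s \ t, μ₁ u = ∑ u ∈ s \ t, ∑ v ∈ t, π u v :=
        Finset.sum_congr rfl fun u _ => (hπ.sum_right_eq ht u).symm
    _ ≤ ∑ u ∈ s \ t, ∑ v ∈ t, (G.dist u v : ℝ) * π u v := by
        refine Finset.sum_le_sum fun u hu => Finset.sum_le_sum fun v hv => ?_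
        have huv : u ≠ v := by rintro rfl; exact (Finset.mem_sdiff.1 hu).2 hv
        have hdist : (1 : ℝ) ≤ G.dist u v := Nat.one_le_cast.2 (hconn.pos_dist_of_ne huv)
        nlinarith [hπ.1 u v]
    _ ≤ ∑ u ∈ s, ∑ v ∈ t, (G.dist u v : ℝ) * π u v :=
        Finset.sum_le_sum_of_subset_of_nonneg Finset.sdiff_subset
          fun u _ _ => Finset.sum_nonneg fun v _ => hterm_nonneg u v
    _ = cost G π := (hπ.cost_eq_sum hs ht).symm

theorem sum_sdiff_le_W1 (hconn : G.Connected) (h₁ : IsProb μ₁) (h₂ : IsProb μ₂)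
    {s t : Finset V} (hs : ∀ u ∉ s, μ₁ u = 0) (ht : ∀ v ∉ t, μ₂ v = 0) :
    ∑ u ∈ s \ t, μ₁ u ≤ W1 G μ₁ μ₂ :=
  le_csInf ⟨_, _, isPlan_mul h₁ h₂, rfl⟩ fun _ ⟨_, hπ, hc⟩ => hc ▸ hπ.sum_sdiff_le_cost hconn hs ht

end Transport

section NonLazyWalk

variable (G) in
theorem ncard_neighborSet (w : V) [Fintype (G.neighborSet w)] :
    (G.neighborSet w).ncard = G.degree w := by
  rw [← G.coe_neighborFinset, Set.ncard_coe_finset, G.card_neighborFinset_eq_degree]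

variable (G) in
theorem ncard_triangleSet (x y : V) [Fintype (G.neighborSet x)] [Fintype (G.neighborSet y)] :
    (triangleSet G x y).ncard = (G.neighborFinset x ∩ G.neighborFinset y).card := by
  rw [triangleSet, ← G.coe_neighborFinset, ← G.coe_neighborFinset, ← Finset.coe_inter,
    Set.ncard_coe_finset]

theorem mu_zero_apply (w z : V) [Fintype (G.neighborSet w)] :
    mu G 0 w z = if z ∈ G.neighborFinset w then (G.degree w : ℝ)⁻¹ else 0 := by
  by_cases hz : z = w
  · subst hz
    simp [mu]
  · simp [mu, hz, ncard_neighborSet]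

theorem mu_zero_eq_zero_of_notMem {w z : V} [Fintype (G.neighborSet w)]
    (hz : z ∉ G.neighborFinset w) : mu G 0 w z = 0 := by
  rw [mu_zero_apply, if_neg hz]

theorem isProb_mu_zero {w : V} [Fintype (G.neighborSet w)] (hw : G.degree w ≠ 0) :
    IsProb (mu G 0 w) := by
  refine ⟨fun z => ?_, ?_⟩
  · rw [mu_zero_apply]
    split_ifs <;> positivity
  · have hmass : ∑ z ∈ G.neighborFinset w, mu G 0 w z = 1 := by
      rw [Finset.sum_congr rfl fun z hz => by rw [mu_zero_apply, if_pos hz], Finset.sum_const,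
        G.card_neighborFinset_eq_degree, nsmul_eq_mul, mul_inv_cancel₀ (Nat.cast_ne_zero.2 hw)]
    exact hmass ▸ hasSum_sum_of_ne_finset_zero fun _ => mu_zero_eq_zero_of_notMem

theorem one_sub_card_inter_div_le_W1 (hconn : G.Connected) {x y : V} (hadj : G.Adj x y)
    [Fintype (G.neighborSet x)] [Fintype (G.neighborSet y)] :
    1 - ((G.neighborFinset x ∩ G.neighborFinset y).card : ℝ) / G.degree x
      ≤ W1 G (mu G 0 x) (mu G 0 y) := by
  have hx : G.degree x ≠ 0 := (G.degree_pos_iff_exists_adj x).2 ⟨y, hadj⟩ |>.ne'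
  have hy : G.degree y ≠ 0 := (G.degree_pos_iff_exists_adj y).2 ⟨x, hadj.symm⟩ |>.ne'
  have hcard : ((G.neighborFinset x \ G.neighborFinset y).card : ℝ)
      = G.degree x - (G.neighborFinset x ∩ G.neighborFinset y).card := by
    rw [← G.card_neighborFinset_eq_degree,
      ← Finset.card_sdiff_add_card_inter (G.neighborFinset x) (G.neighborFinset y)]
    push_cast
    ring
  have hmass : ∑ u ∈ G.neighborFinset x \ G.neighborFinset y, mu G 0 x u
      = 1 - ((G.neighborFinset x ∩ G.neighborFinset y).card : ℝ) / G.degree x := by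
    rw [Finset.sum_congr rfl fun u hu => by
        rw [mu_zero_apply, if_pos (Finset.mem_sdiff.1 hu).1],
      Finset.sum_const, nsmul_eq_mul, hcard]
    field_simp
  exact hmass ▸ sum_sdiff_le_W1 hconn (isProb_mu_zero hx) (isProb_mu_zero hy)
    (fun _ => mu_zero_eq_zero_of_notMem) (fun _ => mu_zero_eq_zero_of_notMem)

theorem kappaAlpha_zero_le (hconn : G.Connected) {x y : V} (hadj : G.Adj x y)
    [Fintype (G.neighborSet x)] [Fintype (G.neighborSet y)] :
    kappaAlpha G 0 x y ≤ ((G.neighborFinset x ∩ G.neighborFinset y).card : ℝ) / G.degree x := by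
  have hdist : (G.dist x y : ℝ) = 1 := by exact_mod_cast SimpleGraph.dist_eq_one_iff_adj.2 hadj
  rw [kappaAlpha, hdist, div_one]
  linarith [one_sub_card_inter_div_le_W1 hconn hadj]

end NonLazyWalk

end OllivierRicci

theorem OllivierRicci.kappa_ne_kappaZero_of_large_general {V : Type*} (G : SimpleGraph V)
    (hlf : G.LocallyFinite) (hconn : G.Connected) (x y : V) (hadj : G.Adj x y)
    (d : ℕ) (hdx : (G.neighborSet x).ncard = d)
    (h : OllivierRicci.kappa G x y > ((OllivierRicci.triangleSet G x y).ncard : ℝ) / d) :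
    OllivierRicci.kappa G x y ≠ OllivierRicci.kappaAlpha G 0 x y := by
  let := hlf
  rw [OllivierRicci.ncard_neighborSet] at hdx
  rw [OllivierRicci.ncard_triangleSet, ← hdx] at h
  exact ((OllivierRicci.kappaAlpha_zero_le hconn hadj).trans_lt h).ne'

/-- large κ forces κ ≠ κ₀. -/
theorem OllivierRicci.kappa_ne_kappaZero_of_large {V : Type*} (G : SimpleGraph V)
    (hlf : G.LocallyFinite) (hconn : G.Connected) (x y : V) (hadj : G.Adj x y)
    (d : ℕ) (hdx : (G.neighborSet x).ncard = d) (hdy : (G.neighborSet y).ncard = d)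
    (h : OllivierRicci.kappa G x y > ((OllivierRicci.triangleSet G x y).ncard : ℝ) / d) :
    OllivierRicci.kappa G x y ≠ OllivierRicci.kappaAlpha G 0 x y :=
  OllivierRicci.kappa_ne_kappaZero_of_large_general G hlf hconn x y hadj d hdx h
end
end
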